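/- arXiv:2106.03670 — 6 statements merged into one kernel-verified Lean document; each statement's English description precedes it below -/
import Mathlib

section
/- Let X and Y be Polish spaces, P = μ ⊗ ν a product probability measure on X × Y, and let A, B ⊆ X × Y be Borel sets with P(A) = 1 and P(B) > 0. Then there exist Borel sets X₀ ⊆ X, Y₀ ⊆ Y with μ(X₀) = ν(Y₀) = 1, and a point (x*, y*) ∈ B ∩ (X₀ × Y₀), such that for every (x, y) ∈ X₀ × Y₀ both (x, y*) and (x*, y) lie in A ∩ (X₀ × Y₀). -/
open MeasureTheory Set

/-! By Fubini, almost every vertical section of `A` is `ν`-full and almost every horizontal one is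
`μ`-full. As `B` has positive measure it contains a point `p ∈ A` lying on a good vertical and a
good horizontal line; cutting the good sets down to the sections of `A` through `p` makes `p` a
hub. -/

namespace MeasureTheory.Measure

variable {α β : Type*} [MeasurableSpace α] [MeasurableSpace β]
  {μ : Measure α} {ν : Measure β} [SFinite ν] {A : Set (α × β)}

theorem exists_measurableSet_of_ae_prod_mem_left (hA : MeasurableSet A)
    (hAae : A ∈ ae (μ.prod ν)) :
    ∃ X₁ ∈ ae μ, MeasurableSet X₁ ∧ ∀ x ∈ X₁, ∀ᵐ y ∂ν, (x, y) ∈ A :=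
  ((ae_prod_mem_iff_ae_ae_mem hA).1 hAae).exists_measurable_mem

theorem exists_measurableSet_of_ae_prod_mem_right [SFinite μ] (hA : MeasurableSet A)
    (hAae : A ∈ ae (μ.prod ν)) :
    ∃ Y₁ ∈ ae ν, MeasurableSet Y₁ ∧ ∀ y ∈ Y₁, ∀ᵐ x ∂μ, (x, y) ∈ A :=
  ((ae_ae_comm (p := fun x y ↦ (x, y) ∈ A) hA).1
    ((ae_prod_mem_iff_ae_ae_mem hA).1 hAae)).exists_measurable_mem

theorem exists_hub_point [SFinite μ] (hA : MeasurableSet A) (hAae : A ∈ ae (μ.prod ν))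
    {B : Set (α × β)} (hB : μ.prod ν B ≠ 0) :
    ∃ X₀ ∈ ae μ, ∃ Y₀ ∈ ae ν, MeasurableSet X₀ ∧ MeasurableSet Y₀ ∧
      ∃ p ∈ B ∩ X₀ ×ˢ Y₀, ∀ x ∈ X₀, ∀ y ∈ Y₀,
        (x, p.2) ∈ A ∩ X₀ ×ˢ Y₀ ∧ (p.1, y) ∈ A ∩ X₀ ×ˢ Y₀ := by
  obtain ⟨X₁, hX₁, hX₁m, hX₁A⟩ := exists_measurableSet_of_ae_prod_mem_left hA hAae
  obtain ⟨Y₁, hY₁, hY₁m, hY₁A⟩ := exists_measurableSet_of_ae_prod_mem_right hA hAae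
  have hgood : ∀ᵐ z ∂μ.prod ν, z ∈ A ∧ z.1 ∈ X₁ ∧ z.2 ∈ Y₁ :=
    Filter.Eventually.and hAae <|
      (quasiMeasurePreserving_fst.ae hX₁).and (quasiMeasurePreserving_snd.ae hY₁)
  obtain ⟨p, hpB, hpA, hpX₁, hpY₁⟩ :=
    exists_mem_of_measure_ne_zero_of_ae hB (ae_restrict_of_ae hgood)
  refine ⟨X₁ ∩ {x | (x, p.2) ∈ A}, Filter.inter_mem hX₁ (hY₁A _ hpY₁),
    Y₁ ∩ {y | (p.1, y) ∈ A}, Filter.inter_mem hY₁ (hX₁A _ hpX₁),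
    hX₁m.inter (hA.preimage measurable_prodMk_right),
    hY₁m.inter (hA.preimage measurable_prodMk_left),
    p, ⟨hpB, ⟨hpX₁, hpA⟩, hpY₁, hpA⟩, ?_⟩
  rintro x ⟨hxX₁, hxA⟩ y ⟨hyY₁, hyA⟩
  exact ⟨⟨hxA, ⟨hxX₁, hxA⟩, hpY₁, hpA⟩, hyA, ⟨hpX₁, hpA⟩, hyY₁, hyA⟩

end MeasureTheory.Measure

theorem hub_point_lemma_general
    {X Y : Type*} [MeasurableSpace X] [MeasurableSpace Y]
    (μ : Measure X) [IsProbabilityMeasure μ] (ν : Measure Y) [IsProbabilityMeasure ν]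
    (A B : Set (X × Y)) (hAm : MeasurableSet A)
    (hA : μ.prod ν A = 1) (hB : 0 < μ.prod ν B) :
    ∃ (X₀ : Set X) (Y₀ : Set Y), MeasurableSet X₀ ∧ MeasurableSet Y₀ ∧
      μ X₀ = 1 ∧ ν Y₀ = 1 ∧
      ∃ p : X × Y, p ∈ B ∩ X₀ ×ˢ Y₀ ∧
        ∀ x ∈ X₀, ∀ y ∈ Y₀,
          (x, p.2) ∈ A ∩ X₀ ×ˢ Y₀ ∧ (p.1, y) ∈ A ∩ X₀ ×ˢ Y₀ := by
  obtain ⟨X₀, hX₀, Y₀, hY₀, hX₀m, hY₀m, p, hp, hhub⟩ :=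
    Measure.exists_hub_point hAm ((mem_ae_iff_prob_eq_one hAm).2 hA) hB.ne'
  exact ⟨X₀, Y₀, hX₀m, hY₀m, (mem_ae_iff_prob_eq_one hX₀m).1 hX₀,
    (mem_ae_iff_prob_eq_one hY₀m).1 hY₀, p, hp, hhub⟩

/-- Hub-point lemma: if P = μ ⊗ ν, P(A) = 1 and P(B) > 0, then there are full-measure
Borel sets X₀, Y₀ and a point (x*, y*) ∈ B ∩ (X₀ × Y₀) such that every (x, y) ∈ X₀ × Y₀
satisfies (x, y*) ∈ A ∩ (X₀ × Y₀) and (x*, y) ∈ A ∩ (X₀ × Y₀). -/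
theorem hub_point_lemma
    {X Y : Type*} [MetricSpace X] [TopologicalSpace.SeparableSpace X] [CompleteSpace X]
    [MeasurableSpace X] [BorelSpace X]
    [MetricSpace Y] [TopologicalSpace.SeparableSpace Y] [CompleteSpace Y]
    [MeasurableSpace Y] [BorelSpace Y]
    (μ : Measure X) [IsProbabilityMeasure μ] (ν : Measure Y) [IsProbabilityMeasure ν]
    (A B : Set (X × Y)) (hAm : MeasurableSet A) (hBm : MeasurableSet B)
    (hA : μ.prod ν A = 1) (hB : 0 < μ.prod ν B) :
    ∃ (X₀ : Set X) (Y₀ : Set Y), MeasurableSet X₀ ∧ MeasurableSet Y₀ ∧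
      μ X₀ = 1 ∧ ν Y₀ = 1 ∧
      ∃ p : X × Y, p ∈ B ∩ X₀ ×ˢ Y₀ ∧
        ∀ x ∈ X₀, ∀ y ∈ Y₀,
          (x, p.2) ∈ A ∩ X₀ ×ˢ Y₀ ∧ (p.1, y) ∈ A ∩ X₀ ×ˢ Y₀ :=
  hub_point_lemma_general μ ν A B hAm hA hB
end

section
/- Let X, Y be Polish spaces with probability measures μ, ν, let π ∈ Π(μ,ν) be a coupling, and let π = μ(dx) ⊗ π_x(dy) be a disintegration of π over its first marginal. If π is not absolutely continuous with respect to μ ⊗ ν, then the set of pairs (x₁, x₂) ∈ X² for which there exist Borel sets U₁, U₂ ⊆ Y with π_{x_i}(U_i) > 0 and π_{x_i}(U_{i+1}) = 0 (indices mod 2) has positive μ² = μ ⊗ μ measure. -/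
open MeasureTheory Set MeasurableSpace ProbabilityTheory
open scoped ENNReal

/-!
Replace the family `κ` by a genuine Markov kernel `k := π.condKernel`. Both disintegrate `π`, so
they have the same set-integrals; on a countably generated space this forces `κ x = k x` for
`μ`-a.e. `x`, although `κ` need not be measurable in `x`.

Non-absolute continuity gives a measurable `W` with `π W > 0` and `(μ ⊗ ν) W = 0`. The first says
that `k x` charges the section `W_x` for `x` in a set `P` of positive `μ`-measure. The second says
that `ν (W_x) = 0` for a.e. `x`, and as `ν = ∫ k x' dμ(x')`, that `k x' (W_x) = 0` for
`(μ ⊗ μ)`-a.e. `(x, x')`. Hence `U_i := W_{x_i}` works for almost every `(x₁, x₂) ∈ P × P`.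
-/

theorem MeasurableSpace.exists_countable_isPiSystem_generateFrom (α : Type*)
    [m : MeasurableSpace α] [CountablyGenerated α] :
    ∃ C : Set (Set α), C.Countable ∧ IsPiSystem C ∧ generateFrom C = m := by
  set e := natGeneratingSequence α
  refine ⟨range fun F : Finset ℕ => ⋂ i ∈ F, e i, countable_range _, ?_, le_antisymm ?_ ?_⟩
  · rintro _ ⟨F, rfl⟩ _ ⟨G, rfl⟩ _
    exact ⟨F ∪ G, Finset.set_biInter_inter F G e⟩
  · refine generateFrom_le ?_
    rintro _ ⟨F, rfl⟩
    exact Finset.measurableSet_biInter F fun i _ => measurableSet_natGeneratingSequence i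
  · conv_lhs => rw [← generateFrom_natGeneratingSequence α]
    refine generateFrom_mono ?_
    rintro _ ⟨n, rfl⟩
    exact ⟨{n}, Finset.set_biInter_singleton n e⟩

section SetLIntegral

variable {α β : Type*} [MeasurableSpace α] [MeasurableSpace β] {μ : Measure α}

/-- `f` need not be measurable: its lower integrals are those of a measurable minorant. -/
theorem ae_le_of_forall_setLIntegral_eq [SigmaFinite μ] {f g : α → ℝ≥0∞} (hg : Measurable g)
    (h : ∀ s, MeasurableSet s → ∫⁻ x in s, f x ∂μ = ∫⁻ x in s, g x ∂μ) : g ≤ᵐ[μ] f := by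
  obtain ⟨f', hf', hf'f, hff'⟩ := exists_measurable_le_forall_setLIntegral_eq μ f
  have : f' =ᵐ[μ] g := ae_eq_of_forall_setLIntegral_eq_of_sigmaFinite hf' hg
    fun s hs _ => (hff' s).symm.trans (h s hs)
  filter_upwards [this] with x hx
  exact hx ▸ hf'f x

theorem ae_apply_eq_of_forall_setLIntegral_eq [SigmaFinite μ] {κ : α → Measure β}
    [∀ a, IsProbabilityMeasure (κ a)] (η : Kernel α β) [IsMarkovKernel η] {C : Set β}
    (hC : MeasurableSet C)
    (h : ∀ s D, MeasurableSet s → MeasurableSet D → ∫⁻ x in s, κ x D ∂μ = ∫⁻ x in s, η x D ∂μ) :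
    ∀ᵐ x ∂μ, κ x C = η x C := by
  have hle : ∀ D, MeasurableSet D → ∀ᵐ x ∂μ, η x D ≤ κ x D := fun D hD =>
    ae_le_of_forall_setLIntegral_eq (η.measurable_coe hD) fun s hs => h s D hs hD
  filter_upwards [hle C hC, hle Cᶜ hC.compl] with x hx hxc
  rw [prob_compl_eq_one_sub hC, prob_compl_eq_one_sub hC,
    ENNReal.sub_le_sub_iff_left prob_le_one ENNReal.one_ne_top] at hxc
  exact le_antisymm hxc hx

theorem ae_eq_kernel_of_forall_setLIntegral_eq [SigmaFinite μ] [CountablyGenerated β]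
    {κ : α → Measure β} [∀ a, IsProbabilityMeasure (κ a)] (η : Kernel α β) [IsMarkovKernel η]
    (h : ∀ s D, MeasurableSet s → MeasurableSet D → ∫⁻ x in s, κ x D ∂μ = ∫⁻ x in s, η x D ∂μ) :
    ∀ᵐ x ∂μ, κ x = η x := by
  obtain ⟨C, hC, hCpi, hCgen⟩ := exists_countable_isPiSystem_generateFrom β
  have hCmeas : ∀ D ∈ C, MeasurableSet D := fun D hD => hCgen ▸ measurableSet_generateFrom hD
  have hae : ∀ᵐ x ∂μ, ∀ D ∈ C, κ x D = η x D := (ae_ball_iff hC).mpr fun D hD =>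
    ae_apply_eq_of_forall_setLIntegral_eq η (hCmeas D hD) h
  filter_upwards [hae] with x hx
  exact ext_of_generate_finite C hCgen.symm hCpi hx (by simp)

end SetLIntegral

section IncompatibleSections

variable {α β : Type*} [MeasurableSpace β]

def IncompatibleSections (κ : α → Measure β) (x₁ x₂ : α) : Prop :=
  ∃ U₁ U₂ : Set β, MeasurableSet U₁ ∧ MeasurableSet U₂ ∧
    0 < κ x₁ U₁ ∧ 0 < κ x₂ U₂ ∧ κ x₁ U₂ = 0 ∧ κ x₂ U₁ = 0

theorem incompatibleSections_congr {κ η : α → Measure β} {x₁ x₂ : α} (h₁ : κ x₁ = η x₁)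
    (h₂ : κ x₂ = η x₂) : IncompatibleSections κ x₁ x₂ ↔ IncompatibleSections η x₁ x₂ := by
  simp only [IncompatibleSections, h₁, h₂]

namespace ProbabilityTheory.Kernel

variable [MeasurableSpace α] {μ : Measure α} {ν : Measure β} {k : Kernel α β} {W : Set (α × β)}

theorem measurable_apply_section_snd [IsSFiniteKernel k] {γ : Type*} [MeasurableSpace γ]
    {W : Set (γ × β)} (hW : MeasurableSet W) :
    Measurable fun p : γ × α => k p.2 (Prod.mk p.1 ⁻¹' W) :=
  measurable_kernel_prodMk_left (κ := prodMkLeft γ k)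
    (t := {q : (γ × α) × β | (q.1.1, q.2) ∈ W}) ((measurable_fst.fst.prodMk measurable_snd) hW)

theorem ae_apply_eq_zero_of_comp_absolutelyContinuous [IsSFiniteKernel k]
    (hk : k ∘ₘ μ ≪ ν) {C : Set β} (hC : MeasurableSet C) (hνC : ν C = 0) :
    ∀ᵐ x ∂μ, k x C = 0 := by
  have : ∫⁻ x, k x C ∂μ = 0 := by
    rw [← Measure.bind_apply hC k.aemeasurable]
    exact hk hνC
  exact (lintegral_eq_zero_iff (k.measurable_coe hC)).mp this

theorem ae_prod_apply_section_eq_zero [SFinite μ] [SFinite ν] [IsSFiniteKernel k]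
    (hk : k ∘ₘ μ ≪ ν) (hW : MeasurableSet W) (hW0 : μ.prod ν W = 0) :
    ∀ᵐ p ∂μ.prod μ, k p.2 (Prod.mk p.1 ⁻¹' W) = 0 := by
  rw [Measure.ae_prod_iff_ae_ae (p := fun p : α × α => k p.2 (Prod.mk p.1 ⁻¹' W) = 0)
    (measurable_apply_section_snd hW (measurableSet_singleton 0))]
  filter_upwards [(Measure.measure_prod_null hW).mp hW0] with x hx
  exact ae_apply_eq_zero_of_comp_absolutelyContinuous hk (measurable_prodMk_left hW) hx

theorem measure_setOf_apply_section_pos_ne_zero [SFinite μ] [IsSFiniteKernel k]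
    (hW : MeasurableSet W) (hπW : (μ ⊗ₘ k) W ≠ 0) : μ {x | 0 < k x (Prod.mk x ⁻¹' W)} ≠ 0 := by
  contrapose! hπW
  have : ∀ᵐ x ∂μ, k x (Prod.mk x ⁻¹' W) = 0 := by
    simpa [ae_iff, pos_iff_ne_zero] using hπW
  rw [Measure.compProd_apply hW, lintegral_congr_ae this, lintegral_zero]

theorem measure_prod_incompatibleSections_pos [SFinite μ] [SFinite ν] [IsSFiniteKernel k]
    (hk : k ∘ₘ μ ≪ ν) (hW : MeasurableSet W) (hW0 : μ.prod ν W = 0) (hπW : (μ ⊗ₘ k) W ≠ 0) :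
    0 < μ.prod μ {p | IncompatibleSections k p.1 p.2} := by
  set P := {x | 0 < k x (Prod.mk x ⁻¹' W)}
  have hP := measure_setOf_apply_section_pos_ne_zero hW hπW
  have h₁ := ae_prod_apply_section_eq_zero hk hW hW0
  have h₂ := Measure.measurePreserving_swap.quasiMeasurePreserving.ae h₁
  calc 0 < μ P * μ P := ENNReal.mul_pos hP hP
    _ = μ.prod μ (P ×ˢ P) := (Measure.prod_prod P P).symm
    _ ≤ _ := measure_mono_ae <| by
      filter_upwards [h₁, h₂] with p hp₁ hp₂ hp
      exact ⟨_, _, measurable_prodMk_left hW, measurable_prodMk_left hW, hp.1, hp.2, hp₂, hp₁⟩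

end ProbabilityTheory.Kernel

end IncompatibleSections

theorem singular_part_gives_incompatible_sections_general
    {X Y : Type*} [MeasurableSpace X]
    [MetricSpace Y] [TopologicalSpace.SeparableSpace Y] [CompleteSpace Y]
    [MeasurableSpace Y] [BorelSpace Y]
    (μ : Measure X) [IsProbabilityMeasure μ] (ν : Measure Y) [IsProbabilityMeasure ν]
    (π : Measure (X × Y)) [IsProbabilityMeasure π]
    (hπ₁ : π.map Prod.fst = μ) (hπ₂ : π.map Prod.snd = ν)
    (κ : X → Measure Y) (hκ : ∀ x, IsProbabilityMeasure (κ x))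
    (hdisint : ∀ (A : Set X) (C : Set Y), MeasurableSet A → MeasurableSet C →
      π (A ×ˢ C) = ∫⁻ x in A, κ x C ∂μ)
    (hsing : ¬ π ≪ μ.prod ν) :
    0 < (μ.prod μ) {p : X × X |
      ∃ U₁ U₂ : Set Y, MeasurableSet U₁ ∧ MeasurableSet U₂ ∧
        0 < κ p.1 U₁ ∧ 0 < κ p.2 U₂ ∧ κ p.1 U₂ = 0 ∧ κ p.2 U₁ = 0} := by
  have : Nonempty Y := nonempty_of_isProbabilityMeasure ν
  set k := π.condKernel
  have hπ : μ ⊗ₘ k = π := by rw [← hπ₁]; exact π.disintegrate k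
  have hν : k ∘ₘ μ = ν := by rw [← Measure.snd_compProd, hπ]; exact hπ₂
  have hκk : ∀ᵐ x ∂μ, κ x = k x := ae_eq_kernel_of_forall_setLIntegral_eq k fun s C hs hC => by
    rw [← hdisint s C hs hC, ← hπ, Measure.compProd_apply_prod hs hC]
  obtain ⟨W, hW, hW0, hπW⟩ : ∃ W, MeasurableSet W ∧ μ.prod ν W = 0 ∧ π W ≠ 0 := by
    by_contra! h
    exact hsing (.mk fun W hW hW0 => h W hW hW0)
  calc 0 < μ.prod μ {p | IncompatibleSections k p.1 p.2} :=
        Kernel.measure_prod_incompatibleSections_pos (Measure.absolutelyContinuous_of_eq hν)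
          hW hW0 (hπ ▸ hπW)
    _ ≤ μ.prod μ {p | IncompatibleSections κ p.1 p.2} := measure_mono_ae <| by
      filter_upwards [Measure.quasiMeasurePreserving_fst.ae hκk,
        Measure.quasiMeasurePreserving_snd.ae hκk] with p h₁ h₂
      exact (incompatibleSections_congr h₁ h₂).mpr

/-- If a coupling π of (μ, ν), with disintegration π = μ(dx) ⊗ κ_x(dy), is not
absolutely continuous with respect to μ ⊗ ν, then the set of pairs (x₁, x₂) for which
there exist Borel sets U₁, U₂ with κ_{x_i}(U_i) > 0 and κ_{x_i}(U_{i+1}) = 0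
(indices mod 2) has positive μ ⊗ μ measure. -/
theorem singular_part_gives_incompatible_sections
    {X Y : Type*} [MetricSpace X] [TopologicalSpace.SeparableSpace X] [CompleteSpace X]
    [MeasurableSpace X] [BorelSpace X]
    [MetricSpace Y] [TopologicalSpace.SeparableSpace Y] [CompleteSpace Y]
    [MeasurableSpace Y] [BorelSpace Y]
    (μ : Measure X) [IsProbabilityMeasure μ] (ν : Measure Y) [IsProbabilityMeasure ν]
    (π : Measure (X × Y)) [IsProbabilityMeasure π]
    (hπ₁ : π.map Prod.fst = μ) (hπ₂ : π.map Prod.snd = ν)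
    (κ : X → Measure Y) (hκ : ∀ x, IsProbabilityMeasure (κ x))
    (hdisint : ∀ (A : Set X) (C : Set Y), MeasurableSet A → MeasurableSet C →
      π (A ×ˢ C) = ∫⁻ x in A, κ x C ∂μ)
    (hsing : ¬ π ≪ μ.prod ν) :
    0 < (μ.prod μ) {p : X × X |
      ∃ U₁ U₂ : Set Y, MeasurableSet U₁ ∧ MeasurableSet U₂ ∧
        0 < κ p.1 U₁ ∧ 0 < κ p.2 U₂ ∧ κ p.1 U₂ = 0 ∧ κ p.2 U₁ = 0} :=
  singular_part_gives_incompatible_sections_general μ ν π hπ₁ hπ₂ κ hκ hdisint hsing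
end

section
/- Let X, Y be Polish spaces and assume X satisfies the Lebesgue differentiation property: for any probability measures ρ ≪ λ on X, the limit lim_{r→0} ρ(B_r(x))/λ(B_r(x)) exists for λ-a.e. x and defines a version of dρ/dλ. Let π be a probability measure on X × Y with first marginal μ, and for x ∈ supp μ and r > 0 define π_x^{(r)}(C) := π(B_r(x) × C)/μ(B_r(x)). Then there is a Borel set X₀ ⊆ supp μ with μ(X₀) = 1 such that for all x ∈ X₀ the weak limit π_x := lim_{r→0} π_x^{(r)} exists in P(Y), and x ↦ π_x defines a regular conditional probability (disintegration) of π given x. -/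
/-!
Let `κ` be the conditional kernel of `π` given the first coordinate, so that
`π (A ×ˢ C) = ∫⁻ x in A, κ x C ∂μ`. For a fixed Borel `C ⊆ Y`, the measure `A ↦ π (A ×ˢ C)`
has density `x ↦ κ x C` with respect to `μ`, so the Lebesgue differentiation property gives
`π (B_r(x) ×ˢ C) / μ (B_r(x)) → κ x C` for `μ`-a.e. `x`. Doing this simultaneously for the
sets of a countable π-system of open sets that generates the topology of `Y` yields weak
convergence of `π_x^{(r)}` to `κ x` by the portmanteau theorem; the case `C = univ` shows that
the balls around such `x` have positive measure.
-/

open MeasureTheory Set Metric Filter Topology ENNReal ProbabilityTheory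
open scoped BoundedContinuousFunction

def LebesgueDifferentiationProperty (X : Type*) [PseudoMetricSpace X] [MeasurableSpace X] : Prop :=
  ∀ (ρ lam : Measure X), IsProbabilityMeasure ρ → IsProbabilityMeasure lam → ρ ≪ lam →
    ∀ᵐ x ∂lam, Tendsto (fun r : ℝ => ρ (ball x r) / lam (ball x r)) (𝓝[>] 0)
      (𝓝 (ρ.rnDeriv lam x))

namespace LebesgueDifferentiationProperty

variable {X : Type*} [PseudoMetricSpace X] [MeasurableSpace X]

theorem ae_tendsto_of_isFiniteMeasure (hX : LebesgueDifferentiationProperty X)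
    {ρ lam : Measure X} [IsFiniteMeasure ρ] [IsProbabilityMeasure lam] (hρ : ρ ≪ lam) :
    ∀ᵐ x ∂lam, Tendsto (fun r : ℝ => ρ (ball x r) / lam (ball x r)) (𝓝[>] 0)
      (𝓝 (ρ.rnDeriv lam x)) := by
  rcases eq_zero_or_neZero ρ with rfl | _
  · filter_upwards [Measure.rnDeriv_zero lam] with x hx
    simp [hx]
  set c := ρ univ
  have hc0 : c ≠ 0 := Measure.measure_univ_ne_zero.2 (NeZero.ne ρ)
  have hctop : c ≠ ∞ := measure_ne_top ρ univ
  have : IsProbabilityMeasure (c⁻¹ • ρ) := ⟨by simp [c]⟩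
  filter_upwards [hX _ lam this inferInstance (hρ.smul_left _),
    Measure.rnDeriv_smul_left_of_ne_top ρ lam (ENNReal.inv_ne_top.2 hc0)] with x hx hrn
  rw [hrn] at hx
  simpa [mul_div_assoc, ENNReal.mul_inv_cancel_left hc0 hctop] using
    ENNReal.Tendsto.const_mul hx (Or.inr hctop)

variable [OpensMeasurableSpace X]

theorem ae_tendsto_compProd_ball_prod_div (hX : LebesgueDifferentiationProperty X)
    (μ : Measure X) [IsProbabilityMeasure μ] {Y : Type*} [MeasurableSpace Y] (κ : Kernel X Y)
    [IsFiniteKernel κ] {C : Set Y} (hC : MeasurableSet C) :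
    ∀ᵐ x ∂μ, Tendsto (fun r : ℝ => (μ ⊗ₘ κ) (ball x r ×ˢ C) / μ (ball x r)) (𝓝[>] 0)
      (𝓝 (κ x C)) := by
  have hmeas : Measurable fun x => κ x C := κ.measurable_coe hC
  have : IsFiniteMeasure (μ.withDensity fun x => κ x C) := isFiniteMeasure_withDensity <| by
    rw [← setLIntegral_univ, ← Measure.compProd_apply_prod MeasurableSet.univ hC]
    exact measure_ne_top _ _
  filter_upwards
    [hX.ae_tendsto_of_isFiniteMeasure (withDensity_absolutelyContinuous μ fun x => κ x C),
    Measure.rnDeriv_withDensity μ hmeas] with x hx hrn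
  rw [hrn] at hx
  refine hx.congr fun r => ?_
  rw [withDensity_apply _ measurableSet_ball, Measure.compProd_apply_prod measurableSet_ball hC]

end LebesgueDifferentiationProperty

/-- In `ℝ≥0∞`, `0 / 0 = 0`, so the ratio vanishes on all balls smaller than a null ball. -/
theorem measure_ball_pos_of_tendsto_div_self {X : Type*} [PseudoMetricSpace X]
    [MeasurableSpace X] {μ : Measure X} {x : X}
    (h : Tendsto (fun r : ℝ => μ (ball x r) / μ (ball x r)) (𝓝[>] 0) (𝓝 1)) {r : ℝ}
    (hr : 0 < r) : 0 < μ (ball x r) := by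
  refine pos_iff_ne_zero.2 fun h0 => one_ne_zero (tendsto_nhds_unique h ?_)
  refine tendsto_const_nhds.congr' ?_
  filter_upwards [Ioc_mem_nhdsGT hr] with s hs
  rw [measure_mono_null (ball_subset_ball hs.2) h0, ENNReal.zero_div]

theorem exists_countable_isPiSystem_isOpen_basis (Y : Type*) [TopologicalSpace Y]
    [SecondCountableTopology Y] :
    ∃ S : Set (Set Y), S.Countable ∧ IsPiSystem S ∧ (∀ s ∈ S, IsOpen s) ∧
      ∀ u, IsOpen u → ∀ y ∈ u, ∃ s ∈ S, s ∈ 𝓝 y ∧ s ⊆ u := by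
  obtain ⟨B, hBcount, -, hB⟩ := TopologicalSpace.exists_countable_basis Y
  refine ⟨sInter '' {t | t.Finite ∧ t ⊆ B}, (countable_ofPred_finite_subset hBcount).image _,
    ?_, ?_, ?_⟩
  · rintro _ ⟨t₁, ⟨ht₁, ht₁B⟩, rfl⟩ _ ⟨t₂, ⟨ht₂, ht₂B⟩, rfl⟩ -
    exact ⟨t₁ ∪ t₂, ⟨ht₁.union ht₂, union_subset ht₁B ht₂B⟩, sInter_union t₁ t₂⟩
  · rintro _ ⟨t, ⟨ht, htB⟩, rfl⟩
    exact ht.isOpen_sInter fun s hs => hB.isOpen (htB hs)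
  · intro u hu y hy
    obtain ⟨b, hbB, hyb, hbu⟩ := hB.exists_subset_of_mem_open hy hu
    exact ⟨b, ⟨{b}, ⟨finite_singleton b, singleton_subset_iff.2 hbB⟩, sInter_singleton b⟩,
      (hB.isOpen hbB).mem_nhds hyb, hbu⟩

theorem tendsto_integral_of_tendsto_measure_of_isPiSystem {Y ι : Type*} [TopologicalSpace Y]
    [SecondCountableTopology Y] [MeasurableSpace Y] [OpensMeasurableSpace Y]
    {S : Set (Set Y)} (hS : IsPiSystem S) (hSmeas : ∀ s ∈ S, MeasurableSet s)
    (hSnhds : ∀ u, IsOpen u → ∀ y ∈ u, ∃ s ∈ S, s ∈ 𝓝 y ∧ s ⊆ u)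
    {L : Filter ι} [L.IsCountablyGenerated] {ν : ι → Measure Y} {ν₀ : Measure Y}
    [IsProbabilityMeasure ν₀] (hν : ∀ᶠ i in L, IsProbabilityMeasure (ν i))
    (h : ∀ s ∈ S, Tendsto (fun i => ν i s) L (𝓝 (ν₀ s))) (g : Y →ᵇ ℝ) :
    Tendsto (fun i => ∫ y, g y ∂ν i) L (𝓝 (∫ y, g y ∂ν₀)) := by
  classical
  let P : ι → ProbabilityMeasure Y := fun i =>
    if hi : IsProbabilityMeasure (ν i) then ⟨ν i, hi⟩ else ⟨ν₀, inferInstance⟩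
  have hP : ∀ᶠ i in L, ν i = P i := hν.mono fun i hi => by simp [P, hi]
  let P₀ : ProbabilityMeasure Y := ⟨ν₀, inferInstance⟩
  have hPS : ∀ s ∈ S, Tendsto (fun i => P i s) L (𝓝 (P₀ s)) := by
    intro s hs
    rw [← ENNReal.tendsto_coe]
    simp only [ProbabilityMeasure.ennreal_coeFn_eq_coeFn_toMeasure]
    refine (h s hs).congr' (hP.mono fun i hi => ?_)
    rw [hi]
  have hlim := hS.tendsto_probabilityMeasure_of_tendsto_of_mem hSmeas hSnhds hPS
  exact (ProbabilityMeasure.tendsto_iff_forall_integral_tendsto.1 hlim g).congr'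
    (hP.mono fun i hi => by simp only [hi])

section BallConditional

variable {X Y : Type*} [MeasurableSpace X] [MeasurableSpace Y]

theorem measure_prod_univ_of_map_fst {π : Measure (X × Y)} {μ : Measure X}
    (hμ : π.map Prod.fst = μ) {B : Set X} (hB : MeasurableSet B) : π (B ×ˢ univ) = μ B := by
  rw [← hμ, Measure.map_apply measurable_fst hB, prod_univ]

theorem map_snd_smul_restrict_prod_univ_apply (π : Measure (X × Y)) (c : ℝ≥0∞) (B : Set X)
    {C : Set Y} (hC : MeasurableSet C) :
    ((c⁻¹ • π.restrict (B ×ˢ univ)).map Prod.snd) C = π (B ×ˢ C) / c := by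
  rw [Measure.map_apply measurable_snd hC, Measure.smul_apply,
    Measure.restrict_apply (measurable_snd hC), smul_eq_mul, ENNReal.div_eq_inv_mul]
  congr 2
  ext ⟨a, b⟩
  simp [and_comm]

variable [PseudoMetricSpace X] [OpensMeasurableSpace X] [TopologicalSpace Y]
  [SecondCountableTopology Y] [OpensMeasurableSpace Y]

theorem tendsto_integral_map_snd_restrict_ball {π : Measure (X × Y)} {μ : Measure X}
    [IsFiniteMeasure μ] (hμ : π.map Prod.fst = μ) {x : X}
    (hx : ∀ r : ℝ, 0 < r → 0 < μ (ball x r)) {S : Set (Set Y)} (hS : IsPiSystem S)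
    (hSmeas : ∀ s ∈ S, MeasurableSet s)
    (hSnhds : ∀ u, IsOpen u → ∀ y ∈ u, ∃ s ∈ S, s ∈ 𝓝 y ∧ s ⊆ u)
    {ν : Measure Y} [IsProbabilityMeasure ν]
    (h : ∀ C ∈ S,
      Tendsto (fun r : ℝ => π (ball x r ×ˢ C) / μ (ball x r)) (𝓝[>] 0) (𝓝 (ν C)))
    (g : Y →ᵇ ℝ) :
    Tendsto (fun r : ℝ => ∫ y, g y ∂(((μ (ball x r))⁻¹ • π.restrict (ball x r ×ˢ univ)).map
      Prod.snd)) (𝓝[>] 0) (𝓝 (∫ y, g y ∂ν)) := by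
  refine tendsto_integral_of_tendsto_measure_of_isPiSystem hS hSmeas hSnhds ?_
    (fun C hC => ?_) g
  · filter_upwards [self_mem_nhdsWithin] with r hr
    refine ⟨?_⟩
    rw [map_snd_smul_restrict_prod_univ_apply π _ _ MeasurableSet.univ,
      measure_prod_univ_of_map_fst hμ measurableSet_ball]
    exact ENNReal.div_self (hx r hr).ne' (measure_ne_top μ _)
  · refine (h C hC).congr fun r => ?_
    rw [map_snd_smul_restrict_prod_univ_apply π _ _ (hSmeas C hC)]

end BallConditional

theorem conditional_differentiation_of_measures_general
    {X Y : Type*} [MetricSpace X]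
    [MeasurableSpace X] [BorelSpace X]
    [MetricSpace Y] [TopologicalSpace.SeparableSpace Y] [CompleteSpace Y]
    [MeasurableSpace Y] [BorelSpace Y]
    -- Lebesgue differentiation property on X:
    (hLeb : ∀ (ρ lam : Measure X), IsProbabilityMeasure ρ → IsProbabilityMeasure lam →
      ρ ≪ lam →
      ∀ᵐ x ∂lam, Tendsto (fun r : ℝ => ρ (ball x r) / lam (ball x r)) (𝓝[>] 0)
        (𝓝 (ρ.rnDeriv lam x)))
    (π : Measure (X × Y)) [IsProbabilityMeasure π]
    (μ : Measure X) (hμ : π.map Prod.fst = μ) :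
    ∃ (X₀ : Set X) (κ : X → Measure Y),
      MeasurableSet X₀ ∧ X₀ ⊆ {x : X | ∀ r : ℝ, 0 < r → 0 < μ (ball x r)} ∧ μ X₀ = 1 ∧
      (∀ x ∈ X₀, IsProbabilityMeasure (κ x)) ∧
      -- weak convergence of π(B_r(x) × ·)/μ(B_r(x)) to κ x for every x ∈ X₀
      (∀ x ∈ X₀, ∀ g : BoundedContinuousFunction Y ℝ,
        Tendsto
          (fun r : ℝ =>
            ∫ y, g y ∂(((μ (ball x r))⁻¹ • π.restrict (ball x r ×ˢ univ)).map Prod.snd))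
          (𝓝[>] 0) (𝓝 (∫ y, g y ∂(κ x)))) ∧
      -- κ is a disintegration (regular conditional probability) of π given x
      (∀ (A : Set X) (C : Set Y), MeasurableSet A → MeasurableSet C →
        π (A ×ˢ C) = ∫⁻ x in A, κ x C ∂μ) := by
  have : Nonempty Y := (nonempty_of_isProbabilityMeasure π).map Prod.snd
  have : IsProbabilityMeasure μ :=
    hμ ▸ Measure.isProbabilityMeasure_map measurable_fst.aemeasurable
  have hdis : μ ⊗ₘ π.condKernel = π := hμ ▸ π.disintegrate π.condKernel
  obtain ⟨S, hScount, hSpi, hSopen, hSnhds⟩ := exists_countable_isPiSystem_isOpen_basis Y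
  have hgood : ∀ᵐ x ∂μ, ∀ C ∈ insert univ S, Tendsto
      (fun r : ℝ => π (ball x r ×ˢ C) / μ (ball x r)) (𝓝[>] 0) (𝓝 (π.condKernel x C)) := by
    refine (ae_ball_iff (hScount.insert univ)).2 fun C hC => ?_
    have hCmeas : MeasurableSet C := hC.elim (· ▸ .univ) fun hC => (hSopen C hC).measurableSet
    simpa only [hdis] using LebesgueDifferentiationProperty.ae_tendsto_compProd_ball_prod_div
      hLeb μ π.condKernel hCmeas
  obtain ⟨X₀, hX₀ae, hX₀meas, hX₀good⟩ := hgood.exists_measurable_mem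
  have hpos : ∀ x ∈ X₀, ∀ r : ℝ, 0 < r → 0 < μ (ball x r) := fun x hx r hr =>
    measure_ball_pos_of_tendsto_div_self (by
      simpa only [measure_prod_univ_of_map_fst hμ measurableSet_ball, measure_univ] using
        hX₀good x hx univ (mem_insert _ _)) hr
  refine ⟨X₀, π.condKernel, hX₀meas, hpos, (prob_compl_eq_zero_iff hX₀meas).1 hX₀ae,
    fun _ _ => inferInstance, fun x hx g => ?_, fun A C hA hC => ?_⟩
  · exact tendsto_integral_map_snd_restrict_ball hμ (hpos x hx) hSpi
      (fun s hs => (hSopen s hs).measurableSet) hSnhds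
      (fun C hC => hX₀good x hx C (mem_insert_of_mem _ hC)) g
  · rw [← Measure.compProd_apply_prod hA hC, hdis]

/-- Conditional differentiation of measures: under the Lebesgue differentiation property
on X, the normalized measures π(B_r(x) × ·)/μ(B_r(x)) converge weakly, for μ-a.e. x in
the support of μ, to a regular conditional probability (disintegration) of π given x. -/
theorem conditional_differentiation_of_measures
    {X Y : Type*} [MetricSpace X] [TopologicalSpace.SeparableSpace X] [CompleteSpace X]
    [MeasurableSpace X] [BorelSpace X]
    [MetricSpace Y] [TopologicalSpace.SeparableSpace Y] [CompleteSpace Y]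
    [MeasurableSpace Y] [BorelSpace Y]
    -- Lebesgue differentiation property on X:
    (hLeb : ∀ (ρ lam : Measure X), IsProbabilityMeasure ρ → IsProbabilityMeasure lam →
      ρ ≪ lam →
      ∀ᵐ x ∂lam, Tendsto (fun r : ℝ => ρ (ball x r) / lam (ball x r)) (𝓝[>] 0)
        (𝓝 (ρ.rnDeriv lam x)))
    (π : Measure (X × Y)) [IsProbabilityMeasure π]
    (μ : Measure X) (hμ : π.map Prod.fst = μ) :
    ∃ (X₀ : Set X) (κ : X → Measure Y),
      MeasurableSet X₀ ∧ X₀ ⊆ {x : X | ∀ r : ℝ, 0 < r → 0 < μ (ball x r)} ∧ μ X₀ = 1 ∧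
      (∀ x ∈ X₀, IsProbabilityMeasure (κ x)) ∧
      -- weak convergence of π(B_r(x) × ·)/μ(B_r(x)) to κ x for every x ∈ X₀
      (∀ x ∈ X₀, ∀ g : BoundedContinuousFunction Y ℝ,
        Tendsto
          (fun r : ℝ =>
            ∫ y, g y ∂(((μ (ball x r))⁻¹ • π.restrict (ball x r ×ˢ univ)).map Prod.snd))
          (𝓝[>] 0) (𝓝 (∫ y, g y ∂(κ x)))) ∧
      -- κ is a disintegration (regular conditional probability) of π given x
      (∀ (A : Set X) (C : Set Y), MeasurableSet A → MeasurableSet C →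
        π (A ×ˢ C) = ∫⁻ x in A, κ x C ∂μ) :=
  conditional_differentiation_of_measures_general hLeb π μ hμ
end

section
/- (Weak cyclical invariance implies factorization.) Let X, Y be Polish spaces, P = μ ⊗ ν, R ∼ P, and π ∈ Π(μ,ν) with π ≪ R. Suppose there exist a version Z : X × Y → [0,∞] of dπ/dR and Borel sets Ω₁, Ω₀ ⊆ X × Y with π(Ω₁) = R(Ω₀) = 1, 0 < Z < ∞ on Ω₁, such that for all k and all z₁, ..., z_k ∈ Ω₁ with z̄₁, ..., z̄_k ∈ Ω₀ (where z̄_i := (x_i, y_{i+1}), y_{k+1} := y₁), one has ∏ Z(z_i) = ∏ Z(z̄_i). Then there exist Borel functions φ : X → (0,∞), ψ : Y → (0,∞) such that (x,y) ↦ φ(x)ψ(y) is a version of dπ/dR. -/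
open MeasureTheory Set ENNReal ProbabilityTheory

private lemma ae_eq_one_of_lintegral_eq_one' {α : Type*} [MeasurableSpace α] {μ : Measure α}
    [IsProbabilityMeasure μ] {f : α → ℝ≥0∞} (hf : Measurable f) (hle : ∀ a, f a ≤ 1)
    (h : ∫⁻ a, f a ∂μ = 1) : ∀ᵐ a ∂μ, f a = 1 := by
  have hsub : ∫⁻ a, 1 - f a ∂μ = 0 := by
    rw [lintegral_sub hf (by simp [h]) (Filter.Eventually.of_forall hle)]
    simp [h]
  have h0 := (lintegral_eq_zero_iff (measurable_const.sub hf)).mp hsub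
  filter_upwards [h0] with a ha
  exact le_antisymm (hle a) (tsub_eq_zero_iff_le.mp ha)

private lemma ennreal_mul_cancel' {a b c : ℝ≥0∞} (hc0 : c ≠ 0) (hct : c ≠ ⊤)
    (h : a * c = b * c) : a = b := by
  have h2 : a * c / c = b * c / c := by rw [h]
  rwa [mul_div_assoc, mul_div_assoc, ENNReal.div_self hc0 hct, mul_one, mul_one] at h2

private lemma factors_pos' {x y d : ℝ≥0∞} (h : x * y = d) (hd0 : d ≠ 0) (hdt : d ≠ ⊤) :
    (x ≠ 0 ∧ x ≠ ⊤) ∧ (y ≠ 0 ∧ y ≠ ⊤) := by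
  have hx0 : x ≠ 0 := fun hx => hd0 (by simp [← h, hx])
  have hy0 : y ≠ 0 := fun hy => hd0 (by simp [← h, hy])
  have hxt : x ≠ ⊤ := fun hx => hdt (by simp [← h, hx, ENNReal.top_mul hy0])
  have hyt : y ≠ ⊤ := fun hy => hdt (by simp [← h, hy, ENNReal.mul_top hx0])
  exact ⟨⟨hx0, hxt⟩, ⟨hy0, hyt⟩⟩

private lemma meas_inter_eq_one' {α : Type*} [MeasurableSpace α] {μ : Measure α}
    [IsProbabilityMeasure μ] {A B : Set α} (hA : MeasurableSet A) (hB : MeasurableSet B)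
    (h1 : μ A = 1) (h2 : μ B = 1) : μ (A ∩ B) = 1 := by
  rw [← prob_compl_eq_zero_iff (hA.inter hB), compl_inter]
  exact measure_union_null ((prob_compl_eq_zero_iff hA).mpr h1)
    ((prob_compl_eq_zero_iff hB).mpr h2)

/-- Weak cyclical invariance implies factorization: if π ∈ Π(μ, ν) with π ≪ R ∼ P has a
density version Z of dπ/dR satisfying the cyclical product identity for points of Ω₁
whose swaps lie in Ω₀ (with π(Ω₁) = R(Ω₀) = 1 and 0 < Z < ∞ on Ω₁), then dπ/dR admits a
version of the product form φ(x)ψ(y) with positive Borel factors. -/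
theorem weak_cyclical_invariance_implies_factorization
    {X Y : Type*} [MetricSpace X] [TopologicalSpace.SeparableSpace X] [CompleteSpace X]
    [MeasurableSpace X] [BorelSpace X]
    [MetricSpace Y] [TopologicalSpace.SeparableSpace Y] [CompleteSpace Y]
    [MeasurableSpace Y] [BorelSpace Y]
    (μ : Measure X) [IsProbabilityMeasure μ] (ν : Measure Y) [IsProbabilityMeasure ν]
    (R : Measure (X × Y)) [IsProbabilityMeasure R]
    (hRP : R ≪ μ.prod ν) (hPR : μ.prod ν ≪ R)
    (π : Measure (X × Y)) [IsProbabilityMeasure π]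
    (hπ₁ : π.map Prod.fst = μ) (hπ₂ : π.map Prod.snd = ν)
    (Z : X × Y → ℝ≥0∞) (hZ : Measurable Z) (hπR : π = R.withDensity Z)
    (Ω₁ Ω₀ : Set (X × Y)) (hΩ₁m : MeasurableSet Ω₁) (hΩ₀m : MeasurableSet Ω₀)
    (hπΩ₁ : π Ω₁ = 1) (hRΩ₀ : R Ω₀ = 1)
    (hZpos : ∀ z ∈ Ω₁, 0 < Z z ∧ Z z ≠ ⊤)
    (hinv : ∀ (k : ℕ) (x : Fin (k + 1) → X) (y : Fin (k + 1) → Y),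
      (∀ i, (x i, y i) ∈ Ω₁) → (∀ i, (x i, y (i + 1)) ∈ Ω₀) →
      ∏ i, Z (x i, y i) = ∏ i, Z (x i, y (i + 1))) :
    ∃ (φ : X → ℝ≥0∞) (ψ : Y → ℝ≥0∞), Measurable φ ∧ Measurable ψ ∧
      (∀ x, 0 < φ x ∧ φ x ≠ ⊤) ∧ (∀ y, 0 < ψ y ∧ ψ y ≠ ⊤) ∧
      π = R.withDensity fun z => φ z.1 * ψ z.2 := by
  classical
  -- P(Ω₀) = 1
  have hPΩ₀ : (μ.prod ν) Ω₀ = 1 := by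
    rw [← prob_compl_eq_zero_iff hΩ₀m]
    exact hPR ((prob_compl_eq_zero_iff hΩ₀m).mpr hRΩ₀)
  -- full-measure sets of full slices
  set X₁ : Set X := {x | ν (Prod.mk x ⁻¹' Ω₀) = 1} with hX₁def
  set Y₁ : Set Y := {y | μ ((fun x => (x, y)) ⁻¹' Ω₀) = 1} with hY₁def
  have hX₁m : MeasurableSet X₁ :=
    measurable_measure_prodMk_left hΩ₀m (measurableSet_singleton 1)
  have hY₁m : MeasurableSet Y₁ :=
    measurable_measure_prodMk_right hΩ₀m (measurableSet_singleton 1)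
  have hμX₁ : μ X₁ = 1 := by
    have hae : ∀ᵐ x ∂μ, ν (Prod.mk x ⁻¹' Ω₀) = 1 := by
      refine ae_eq_one_of_lintegral_eq_one' (measurable_measure_prodMk_left hΩ₀m)
        (fun a => prob_le_one) ?_
      rw [← Measure.prod_apply hΩ₀m]; exact hPΩ₀
    rw [← prob_compl_eq_zero_iff hX₁m]
    exact hae
  have hνY₁ : ν Y₁ = 1 := by
    have hae : ∀ᵐ y ∂ν, μ ((fun x => (x, y)) ⁻¹' Ω₀) = 1 := by
      refine ae_eq_one_of_lintegral_eq_one' (measurable_measure_prodMk_right hΩ₀m)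
        (fun a => prob_le_one) ?_
      rw [← Measure.prod_apply_symm hΩ₀m]; exact hPΩ₀
    rw [← prob_compl_eq_zero_iff hY₁m]
    exact hae
  -- marginals of π
  have hπfst : ∀ {s : Set X}, MeasurableSet s → π (s ×ˢ univ) = μ s := by
    intro s hs
    rw [prod_univ, ← Measure.map_apply measurable_fst hs, hπ₁]
  have hπsnd : ∀ {s : Set Y}, MeasurableSet s → π (univ ×ˢ s) = ν s := by
    intro s hs
    rw [univ_prod, ← Measure.map_apply measurable_snd hs, hπ₂]
  -- hub point
  have hhub : π (Ω₁ ∩ (X₁ ×ˢ univ) ∩ (univ ×ˢ Y₁)) = 1 := by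
    refine meas_inter_eq_one' (hΩ₁m.inter (hX₁m.prod MeasurableSet.univ))
      (MeasurableSet.univ.prod hY₁m) ?_ (by rw [hπsnd hY₁m]; exact hνY₁)
    exact meas_inter_eq_one' hΩ₁m (hX₁m.prod MeasurableSet.univ) hπΩ₁
      (by rw [hπfst hX₁m]; exact hμX₁)
  obtain ⟨⟨xs, ys⟩, hmem⟩ : (Ω₁ ∩ (X₁ ×ˢ univ) ∩ (univ ×ˢ Y₁)).Nonempty :=
    nonempty_of_measure_ne_zero (by rw [hhub]; exact one_ne_zero)
  obtain ⟨⟨hxys, hxsX₁, -⟩, -, hysY₁⟩ := hmem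
  haveI : Nonempty X := ⟨xs⟩
  haveI : Nonempty Y := ⟨ys⟩
  -- the good sets X₀, Y₀
  set X₀ : Set X := X₁ ∩ ((fun x => (x, ys)) ⁻¹' Ω₀) with hX₀def
  set Y₀ : Set Y := Y₁ ∩ (Prod.mk xs ⁻¹' Ω₀) with hY₀def
  have hX₀m : MeasurableSet X₀ :=
    hX₁m.inter (hΩ₀m.preimage (measurable_id.prodMk measurable_const))
  have hY₀m : MeasurableSet Y₀ :=
    hY₁m.inter (hΩ₀m.preimage (measurable_const.prodMk measurable_id))
  have hμX₀ : μ X₀ = 1 := meas_inter_eq_one' hX₁m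
    (hΩ₀m.preimage (measurable_id.prodMk measurable_const)) hμX₁ hysY₁
  have hνY₀ : ν Y₀ = 1 := meas_inter_eq_one' hY₁m
    (hΩ₀m.preimage (measurable_const.prodMk measurable_id)) hνY₁ hxsX₁
  -- the hub value
  obtain ⟨hZs0, hZst⟩ := hZpos _ hxys
  -- the factors
  set φ : X → ℝ≥0∞ := fun x =>
    if 0 < Z (x, ys) ∧ Z (x, ys) ≠ ⊤ then Z (x, ys) / Z (xs, ys) else 1 with hφdef
  set ψ : Y → ℝ≥0∞ := fun y =>
    if 0 < Z (xs, y) ∧ Z (xs, y) ≠ ⊤ then Z (xs, y) else 1 with hψdef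
  have hgx : Measurable fun x => Z (x, ys) := hZ.comp (measurable_id.prodMk measurable_const)
  have hgy : Measurable fun y => Z (xs, y) := hZ.comp (measurable_const.prodMk measurable_id)
  have hφm : Measurable φ := by
    refine Measurable.ite ?_ (hgx.div measurable_const) measurable_const
    exact (measurableSet_lt measurable_const hgx).inter ((hgx (measurableSet_singleton ⊤)).compl)
  have hψm : Measurable ψ := by
    refine Measurable.ite ?_ hgy measurable_const
    exact (measurableSet_lt measurable_const hgy).inter ((hgy (measurableSet_singleton ⊤)).compl)
  have hφpos : ∀ x, 0 < φ x ∧ φ x ≠ ⊤ := by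
    intro x
    rw [hφdef]
    by_cases h : 0 < Z (x, ys) ∧ Z (x, ys) ≠ ⊤
    · simp only [if_pos h]
      exact ⟨ENNReal.div_pos h.1.ne' hZst, (ENNReal.div_lt_top h.2 hZs0.ne').ne⟩
    · simp [if_neg h]
  have hψpos : ∀ y, 0 < ψ y ∧ ψ y ≠ ⊤ := by
    intro y
    rw [hψdef]
    by_cases h : 0 < Z (xs, y) ∧ Z (xs, y) ≠ ⊤
    · simp only [if_pos h]
      exact ⟨h.1, h.2⟩
    · simp [if_neg h]
  -- key identity from 2-cycles
  have key1 : ∀ x ∈ X₀, ∀ y ∈ Y₀, (x, y) ∈ Ω₁ →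
      Z (x, y) * Z (xs, ys) = Z (x, ys) * Z (xs, y) := by
    intro x hx y hy hxy
    have hz : ∀ i : Fin 2, ((![x, xs]) i, (![y, ys]) i) ∈ Ω₁ := by
      intro i; fin_cases i
      · simpa using hxy
      · simpa using hxys
    have hw : ∀ i : Fin 2, ((![x, xs]) i, (![y, ys]) (i + 1)) ∈ Ω₀ := by
      intro i; fin_cases i
      · simpa using hx.2
      · simpa using hy.2
    have h := hinv 1 ![x, xs] ![y, ys] hz hw
    simpa [Fin.prod_univ_two] using h
  -- key identity from 3-cycles
  have key2 : ∀ a ∈ X₀, ∀ b ∈ Y₀, ∀ ya ∈ Y₀, ∀ xb ∈ X₀, (a, b) ∈ Ω₀ →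
      (a, ya) ∈ Ω₁ → (xb, b) ∈ Ω₁ →
      Z (a, ya) * (Z (xb, b) * Z (xs, ys)) = Z (a, b) * (Z (xb, ys) * Z (xs, ya)) := by
    intro a ha b hb ya hya xb hxb hab haya hxbb
    have hz : ∀ i : Fin 3, ((![a, xb, xs]) i, (![ya, b, ys]) i) ∈ Ω₁ := by
      intro i; fin_cases i
      · simpa using haya
      · simpa using hxbb
      · simpa using hxys
    have hw : ∀ i : Fin 3, ((![a, xb, xs]) i, (![ya, b, ys]) (i + 1)) ∈ Ω₀ := by
      intro i; fin_cases i
      · simpa using hab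
      · simpa using hxb.2
      · simpa using hya.2
    have h := hinv 2 ![a, xb, xs] ![ya, b, ys] hz hw
    simpa [Fin.prod_univ_three, mul_assoc] using h
  -- the pointwise factorization on the good set
  have main : ∀ a ∈ X₀, ∀ b ∈ Y₀, (a, b) ∈ Ω₀ →
      (∃ y, y ∈ Y₀ ∧ (a, y) ∈ Ω₁) → (∃ x, x ∈ X₀ ∧ (x, b) ∈ Ω₁) →
      Z (a, b) = φ a * ψ b := by
    rintro a ha b hb hab ⟨ya, hya, haya⟩ ⟨xb, hxb, hxbb⟩
    obtain ⟨hZa0, hZat⟩ := hZpos _ haya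
    obtain ⟨hZb0, hZbt⟩ := hZpos _ hxbb
    have e1 := key1 a ha ya hya haya
    have e2 := key1 xb hxb b hb hxbb
    obtain ⟨⟨hays0, hayst⟩, ⟨hxsya0, hxsyat⟩⟩ :=
      factors_pos' e1.symm (by exact mul_ne_zero hZa0.ne' hZs0.ne')
        (ENNReal.mul_ne_top hZat hZst)
    obtain ⟨⟨hxbys0, hxbyst⟩, ⟨hxsb0, hxsbt⟩⟩ :=
      factors_pos' e2.symm (by exact mul_ne_zero hZb0.ne' hZs0.ne')
        (ENNReal.mul_ne_top hZbt hZst)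
    have hφa : φ a = Z (a, ys) / Z (xs, ys) := by
      rw [hφdef]; exact if_pos ⟨pos_iff_ne_zero.mpr hays0, hayst⟩
    have hψb : ψ b = Z (xs, b) := by
      rw [hψdef]; exact if_pos ⟨pos_iff_ne_zero.mpr hxsb0, hxsbt⟩
    set w : ℝ≥0∞ := Z (a, ys) / Z (xs, ys) with hwdef
    have hwmul : w * Z (xs, ys) = Z (a, ys) := ENNReal.div_mul_cancel hZs0.ne' hZst
    rw [hφa, hψb]
    refine ennreal_mul_cancel' (c := Z (xb, ys) * (Z (xs, ya) * Z (xs, ys)))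
      (by exact mul_ne_zero hxbys0 (mul_ne_zero hxsya0 hZs0.ne'))
      (ENNReal.mul_ne_top hxbyst (ENNReal.mul_ne_top hxsyat hZst)) ?_
    have e1' : Z (a, ys) * Z (xs, ya) = Z (a, ya) * Z (xs, ys) := by
      rw [← e1]
    have e2' : Z (xs, b) * Z (xb, ys) = Z (xb, b) * Z (xs, ys) := by
      rw [mul_comm (Z (xs, b)) (Z (xb, ys)), ← e2]
    calc Z (a, b) * (Z (xb, ys) * (Z (xs, ya) * Z (xs, ys)))
        = Z (a, b) * (Z (xb, ys) * Z (xs, ya)) * Z (xs, ys) := by ring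
      _ = Z (a, ya) * (Z (xb, b) * Z (xs, ys)) * Z (xs, ys) := by
          rw [← key2 a ha b hb ya hya xb hxb hab haya hxbb]
      _ = (Z (a, ya) * Z (xs, ys)) * (Z (xb, b) * Z (xs, ys)) := by ring
      _ = (Z (a, ys) * Z (xs, ya)) * (Z (xs, b) * Z (xb, ys)) := by rw [e1', e2']
      _ = (w * Z (xs, ys)) * Z (xs, ya) * (Z (xs, b) * Z (xb, ys)) := by rw [hwmul]
      _ = w * Z (xs, b) * (Z (xb, ys) * (Z (xs, ya) * Z (xs, ys))) := by ring
  -- a.e. existence of partners in the first coordinate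
  have hE : ∀ᵐ a ∂μ, ∃ y, y ∈ Y₀ ∧ (a, y) ∈ Ω₁ := by
    set S : Set (X × Y) := Ω₁ ∩ (univ ×ˢ Y₀) with hSdef
    have hSm : MeasurableSet S := hΩ₁m.inter (MeasurableSet.univ.prod hY₀m)
    have hπS : π S = 1 :=
      meas_inter_eq_one' hΩ₁m (MeasurableSet.univ.prod hY₀m) hπΩ₁
        (by rw [hπsnd hY₀m]; exact hνY₀)
    have hfst : π.fst = μ := hπ₁
    have hdis : μ ⊗ₘ π.condKernel = π := by
      rw [← hfst]; exact π.disintegrate π.condKernel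
    have hint : ∫⁻ a, π.condKernel a (Prod.mk a ⁻¹' S) ∂μ = 1 := by
      rw [← Measure.compProd_apply hSm, hdis, hπS]
    have hae := ae_eq_one_of_lintegral_eq_one'
      (Kernel.measurable_kernel_prodMk_left hSm) (fun a => prob_le_one) hint
    filter_upwards [hae] with a ha
    obtain ⟨y, hy⟩ : (Prod.mk a ⁻¹' S).Nonempty :=
      nonempty_of_measure_ne_zero (by rw [ha]; exact one_ne_zero)
    exact ⟨y, hy.2.2, hy.1⟩
  -- a.e. existence of partners in the second coordinate
  have hF : ∀ᵐ b ∂ν, ∃ x, x ∈ X₀ ∧ (x, b) ∈ Ω₁ := by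
    set ρ : Measure (Y × X) := π.map Prod.swap with hρdef
    haveI : IsProbabilityMeasure ρ := Measure.isProbabilityMeasure_map measurable_swap.aemeasurable
    have hρfst : ρ.fst = ν := by
      show ρ.map Prod.fst = ν
      rw [hρdef, Measure.map_map measurable_fst measurable_swap]
      exact hπ₂
    set T : Set (Y × X) := (Prod.swap ⁻¹' Ω₁) ∩ (univ ×ˢ X₀) with hTdef
    have hTm : MeasurableSet T :=
      (hΩ₁m.preimage measurable_swap).inter (MeasurableSet.univ.prod hX₀m)
    have hρT : ρ T = 1 := by
      rw [hρdef, Measure.map_apply measurable_swap hTm]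
      have : Prod.swap ⁻¹' T = Ω₁ ∩ (X₀ ×ˢ univ) := by
        ext z; simp [hTdef, and_comm]
      rw [this]
      exact meas_inter_eq_one' hΩ₁m (hX₀m.prod MeasurableSet.univ) hπΩ₁
        (by rw [hπfst hX₀m]; exact hμX₀)
    have hdis : ν ⊗ₘ ρ.condKernel = ρ := by
      rw [← hρfst]; exact ρ.disintegrate ρ.condKernel
    have hint : ∫⁻ b, ρ.condKernel b (Prod.mk b ⁻¹' T) ∂ν = 1 := by
      rw [← Measure.compProd_apply hTm, hdis, hρT]
    have hae := ae_eq_one_of_lintegral_eq_one'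
      (Kernel.measurable_kernel_prodMk_left hTm) (fun a => prob_le_one) hint
    filter_upwards [hae] with b hb
    obtain ⟨x, hx⟩ : (Prod.mk b ⁻¹' T).Nonempty :=
      nonempty_of_measure_ne_zero (by rw [hb]; exact one_ne_zero)
    exact ⟨x, hx.2.2, hx.1⟩
  -- combine into a P-a.e. identity
  have hmapfst : (μ.prod ν).map Prod.fst = μ := by
    rw [Measure.map_fst_prod]; simp
  have hmapsnd : (μ.prod ν).map Prod.snd = ν := by
    rw [Measure.map_snd_prod]; simp
  have hPae : ∀ᵐ z ∂(μ.prod ν), Z z = φ z.1 * ψ z.2 := by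
    have h1 : ∀ᵐ z ∂(μ.prod ν), z ∈ Ω₀ := by
      rw [ae_iff]
      have : {z : X × Y | ¬ z ∈ Ω₀} = Ω₀ᶜ := rfl
      rw [this]
      exact (prob_compl_eq_zero_iff hΩ₀m).mpr hPΩ₀
    have h2 : ∀ᵐ z ∂(μ.prod ν), z.1 ∈ X₀ := by
      refine ae_of_ae_map measurable_fst.aemeasurable ?_
      rw [hmapfst]
      rw [ae_iff]
      have : {a : X | ¬ a ∈ X₀} = X₀ᶜ := rfl
      rw [this]
      exact (prob_compl_eq_zero_iff hX₀m).mpr hμX₀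
    have h3 : ∀ᵐ z ∂(μ.prod ν), z.2 ∈ Y₀ := by
      refine ae_of_ae_map measurable_snd.aemeasurable ?_
      rw [hmapsnd]
      rw [ae_iff]
      have : {b : Y | ¬ b ∈ Y₀} = Y₀ᶜ := rfl
      rw [this]
      exact (prob_compl_eq_zero_iff hY₀m).mpr hνY₀
    have h4 : ∀ᵐ z ∂(μ.prod ν), ∃ y, y ∈ Y₀ ∧ (z.1, y) ∈ Ω₁ :=
      ae_of_ae_map (p := fun a => ∃ y, y ∈ Y₀ ∧ (a, y) ∈ Ω₁)
        measurable_fst.aemeasurable (by rw [hmapfst]; exact hE)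
    have h5 : ∀ᵐ z ∂(μ.prod ν), ∃ x, x ∈ X₀ ∧ (x, z.2) ∈ Ω₁ :=
      ae_of_ae_map (p := fun b => ∃ x, x ∈ X₀ ∧ (x, b) ∈ Ω₁)
        measurable_snd.aemeasurable (by rw [hmapsnd]; exact hF)
    filter_upwards [h1, h2, h3, h4, h5] with z hz1 hz2 hz3 hz4 hz5
    have := main z.1 hz2 z.2 hz3 (by rwa [Prod.mk.eta]) hz4 hz5
    rwa [Prod.mk.eta] at this
  refine ⟨φ, ψ, hφm, hψm, hφpos, hψpos, ?_⟩
  rw [hπR]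
  exact withDensity_congr_ae (hPae.filter_mono hRP.ae_le)
end

section
/- Let X, Y be Polish spaces, μ, ν probability measures, P = μ ⊗ ν, and let R ∼ P. If π, π' ∈ Π(μ,ν) both have everywhere-positive densities with respect to R admitting factorizations dπ/dR(x,y) = φ(x)ψ(y) and dπ'/dR(x,y) = φ'(x)ψ'(y) with positive Borel factors, then π = π'. That is, there is at most one coupling π ∈ Π(μ,ν) such that (π, R) is cyclically invariant. -/
open MeasureTheory Set ENNReal

/-! Write `dπ = u(x) v(y) dπ'` with `u = φ / φ'` and `v = ψ / ψ'`. The Cayley transform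
`c t = (t - 1) / (t + 1)` is bounded on `[0, ∞)`, and
`c s + c t = 2 (s t - 1) / ((s + 1) (t + 1))` has the sign of `s t - 1`. So
`G (x, y) = c (u x) + c (v y)` is bounded, of the form `a(x) + b(y)` (hence has the same integral
against `π` and `π'`, which share their marginals), and has the strict sign of `u v - 1`. Then
`∫ (u v - 1) G dπ' = ∫ G dπ - ∫ G dπ' = 0` forces `u v = 1` `π'`-a.e. Here `G` stands in for
`log (u v)` in the relative-entropy argument; being bounded, it raises no integrability issues. -/

noncomputable def cayley (t : ℝ) : ℝ := (t - 1) / (t + 1)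

@[fun_prop]
lemma measurable_cayley : Measurable cayley := by
  unfold cayley; fun_prop

lemma abs_cayley_le_one {t : ℝ} (ht : 0 ≤ t) : |cayley t| ≤ 1 := by
  rw [cayley, abs_div, abs_of_pos (by linarith : 0 < t + 1), div_le_one (by linarith), abs_le]
  constructor <;> linarith

lemma mul_cayley_add_cayley {s t : ℝ} (hs : 0 ≤ s) (ht : 0 ≤ t) :
    (s * t - 1) * (cayley s + cayley t) = 2 * (s * t - 1) ^ 2 / ((s + 1) * (t + 1)) := by
  unfold cayley
  field_simp
  ring

lemma mul_cayley_add_cayley_pos {s t : ℝ} (hs : 0 ≤ s) (ht : 0 ≤ t) (hst : s * t ≠ 1) :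
    0 < (s * t - 1) * (cayley s + cayley t) := by
  rw [mul_cayley_add_cayley hs ht]
  have : s * t - 1 ≠ 0 := sub_ne_zero.2 hst
  positivity

section

variable {Z : Type*} [MeasurableSpace Z]

lemma integrable_toReal_of_eq_withDensity {κ κ' : Measure Z} [IsFiniteMeasure κ]
    {f : Z → ℝ≥0∞} (hf : Measurable f) (hκ : κ = κ'.withDensity f) :
    Integrable (fun z => (f z).toReal) κ' := by
  refine integrable_toReal_of_lintegral_ne_top hf.aemeasurable ?_
  rw [← setLIntegral_univ, ← withDensity_apply _ MeasurableSet.univ, ← hκ]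
  exact measure_ne_top κ univ

lemma integrable_cayley_toReal (m : Measure Z) [IsFiniteMeasure m] {u : Z → ℝ≥0∞}
    (hu : Measurable u) : Integrable (fun z => cayley (u z).toReal) m :=
  (integrable_const (1 : ℝ)).mono'
    (measurable_cayley.comp hu.ennreal_toReal).aestronglyMeasurable
    (.of_forall fun _ => abs_cayley_le_one toReal_nonneg)

theorem eq_of_eq_withDensity_of_integral_eq {κ κ' : Measure Z} [IsFiniteMeasure κ]
    [IsFiniteMeasure κ'] {f : Z → ℝ≥0∞} (hf : Measurable f) (hf_top : ∀ z, f z ≠ ∞)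
    (hκ : κ = κ'.withDensity f) {G : Z → ℝ} (hG : Measurable G) {C : ℝ}
    (hG_bdd : ∀ z, ‖G z‖ ≤ C) (hG_sign : ∀ z, f z ≠ 1 → 0 < ((f z).toReal - 1) * G z)
    (h_integral : ∫ z, G z ∂κ = ∫ z, G z ∂κ') :
    κ = κ' := by
  have hG_int : Integrable G κ' :=
    (integrable_const C).mono' hG.aestronglyMeasurable (.of_forall hG_bdd)
  have hfG_int : Integrable (fun z => (f z).toReal * G z) κ' :=
    (integrable_toReal_of_eq_withDensity hf hκ).mul_bdd hG.aestronglyMeasurable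
      (.of_forall hG_bdd)
  have h_density : ∫ z, G z ∂κ = ∫ z, (f z).toReal * G z ∂κ' := by
    rw [hκ, integral_withDensity_eq_integral_toReal_smul hf
      (.of_forall fun z => (hf_top z).lt_top)]
    rfl
  have h_zero : ∫ z, ((f z).toReal - 1) * G z ∂κ' = 0 := by
    simp_rw [sub_mul, one_mul]
    rw [integral_sub hfG_int hG_int, ← h_density, h_integral, sub_self]
  have h_nonneg : ∀ z, 0 ≤ ((f z).toReal - 1) * G z := fun z => by
    by_cases hz : f z = 1
    · simp [hz]
    · exact (hG_sign z hz).le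
  have h_int : Integrable (fun z => ((f z).toReal - 1) * G z) κ' := by
    simp_rw [sub_mul, one_mul]
    exact hfG_int.sub hG_int
  have h_one : f =ᵐ[κ'] 1 := by
    filter_upwards [(integral_eq_zero_iff_of_nonneg h_nonneg h_int).1 h_zero] with z hz
    by_contra hz_one
    exact (hG_sign z hz_one).ne' hz
  rw [hκ, withDensity_congr_ae h_one, withDensity_one]

end

section

variable {X Y : Type*} [MeasurableSpace X] [MeasurableSpace Y]

lemma integral_comp_fst_add_comp_snd (κ : Measure (X × Y)) {a : X → ℝ} {b : Y → ℝ}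
    (ha : Integrable a (κ.map Prod.fst)) (hb : Integrable b (κ.map Prod.snd)) :
    ∫ z, a z.1 + b z.2 ∂κ = ∫ x, a x ∂(κ.map Prod.fst) + ∫ y, b y ∂(κ.map Prod.snd) := by
  rw [integral_map measurable_fst.aemeasurable ha.aestronglyMeasurable,
    integral_map measurable_snd.aemeasurable hb.aestronglyMeasurable]
  exact integral_add (ha.comp_measurable measurable_fst) (hb.comp_measurable measurable_snd)

theorem eq_of_eq_withDensity_mul_of_map_eq {κ κ' : Measure (X × Y)} [IsFiniteMeasure κ']
    {u : X → ℝ≥0∞} {v : Y → ℝ≥0∞} (hu : Measurable u) (hv : Measurable v)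
    (hu_top : ∀ x, u x ≠ ∞) (hv_top : ∀ y, v y ≠ ∞)
    (hκ : κ = κ'.withDensity fun z => u z.1 * v z.2)
    (hfst : κ.map Prod.fst = κ'.map Prod.fst) (hsnd : κ.map Prod.snd = κ'.map Prod.snd) :
    κ = κ' := by
  have : IsFiniteMeasure (κ.map Prod.fst) := hfst ▸ inferInstance
  have : IsFiniteMeasure κ := Measure.isFiniteMeasure_of_map measurable_fst.aemeasurable
  refine eq_of_eq_withDensity_of_integral_eq (by fun_prop)
    (fun z => mul_ne_top (hu_top z.1) (hv_top z.2)) hκ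
    (G := fun z => cayley (u z.1).toReal + cayley (v z.2).toReal) (C := 2)
    (by fun_prop) (fun z => ?_) (fun z hz => ?_) ?_
  · have := abs_cayley_le_one (toReal_nonneg (a := u z.1))
    have := abs_cayley_le_one (toReal_nonneg (a := v z.2))
    exact (norm_add_le _ _).trans (by simp only [Real.norm_eq_abs]; linarith)
  · rw [toReal_mul]
    refine mul_cayley_add_cayley_pos toReal_nonneg toReal_nonneg ?_
    rwa [← toReal_mul, Ne, toReal_eq_one_iff]
  · rw [integral_comp_fst_add_comp_snd κ (integrable_cayley_toReal _ hu)
      (integrable_cayley_toReal _ hv), integral_comp_fst_add_comp_snd κ'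
      (integrable_cayley_toReal _ hu) (integrable_cayley_toReal _ hv), hfst, hsnd]

end

theorem cyclically_invariant_coupling_unique_general
    {X Y : Type*} [MeasurableSpace X] [MeasurableSpace Y]
    (μ : Measure X) (ν : Measure Y) (R : Measure (X × Y))
    (π π' : Measure (X × Y)) [IsProbabilityMeasure π']
    (hπ₁ : π.map Prod.fst = μ) (hπ₂ : π.map Prod.snd = ν)
    (hπ'₁ : π'.map Prod.fst = μ) (hπ'₂ : π'.map Prod.snd = ν)
    (φ : X → ℝ≥0∞) (ψ : Y → ℝ≥0∞) (hφ : Measurable φ) (hψ : Measurable ψ)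
    (hφpos : ∀ x, 0 < φ x ∧ φ x ≠ ⊤) (hψpos : ∀ y, 0 < ψ y ∧ ψ y ≠ ⊤)
    (hπR : π = R.withDensity fun z => φ z.1 * ψ z.2)
    (φ' : X → ℝ≥0∞) (ψ' : Y → ℝ≥0∞) (hφ' : Measurable φ') (hψ' : Measurable ψ')
    (hφ'pos : ∀ x, 0 < φ' x ∧ φ' x ≠ ⊤) (hψ'pos : ∀ y, 0 < ψ' y ∧ ψ' y ≠ ⊤)
    (hπ'R : π' = R.withDensity fun z => φ' z.1 * ψ' z.2) :
    π = π' := by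
  refine eq_of_eq_withDensity_mul_of_map_eq (hφ.div hφ') (hψ.div hψ')
    (fun x => div_ne_top (hφpos x).2 (hφ'pos x).1.ne')
    (fun y => div_ne_top (hψpos y).2 (hψ'pos y).1.ne') ?_
    (hπ₁.trans hπ'₁.symm) (hπ₂.trans hπ'₂.symm)
  rw [hπR, hπ'R, ← withDensity_mul _ (by fun_prop) (by fun_prop)]
  congr 1 with z
  simp only [Pi.mul_apply, Pi.div_apply]
  rw [mul_mul_mul_comm, ENNReal.mul_div_cancel (hφ'pos z.1).1.ne' (hφ'pos z.1).2,
    ENNReal.mul_div_cancel (hψ'pos z.2).1.ne' (hψ'pos z.2).2]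

/-- Uniqueness of cyclically invariant couplings: if two couplings π, π' ∈ Π(μ, ν) both
have densities with respect to R ∼ P := μ ⊗ ν that factor as positive products
φ(x)ψ(y) and φ'(x)ψ'(y), then π = π'. -/
theorem cyclically_invariant_coupling_unique
    {X Y : Type*} [MetricSpace X] [TopologicalSpace.SeparableSpace X] [CompleteSpace X]
    [MeasurableSpace X] [BorelSpace X]
    [MetricSpace Y] [TopologicalSpace.SeparableSpace Y] [CompleteSpace Y]
    [MeasurableSpace Y] [BorelSpace Y]
    (μ : Measure X) [IsProbabilityMeasure μ] (ν : Measure Y) [IsProbabilityMeasure ν]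
    (R : Measure (X × Y)) [IsProbabilityMeasure R]
    (hRP : R ≪ μ.prod ν) (hPR : μ.prod ν ≪ R)
    (π π' : Measure (X × Y)) [IsProbabilityMeasure π] [IsProbabilityMeasure π']
    (hπ₁ : π.map Prod.fst = μ) (hπ₂ : π.map Prod.snd = ν)
    (hπ'₁ : π'.map Prod.fst = μ) (hπ'₂ : π'.map Prod.snd = ν)
    (φ : X → ℝ≥0∞) (ψ : Y → ℝ≥0∞) (hφ : Measurable φ) (hψ : Measurable ψ)
    (hφpos : ∀ x, 0 < φ x ∧ φ x ≠ ⊤) (hψpos : ∀ y, 0 < ψ y ∧ ψ y ≠ ⊤)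
    (hπR : π = R.withDensity fun z => φ z.1 * ψ z.2)
    (φ' : X → ℝ≥0∞) (ψ' : Y → ℝ≥0∞) (hφ' : Measurable φ') (hψ' : Measurable ψ')
    (hφ'pos : ∀ x, 0 < φ' x ∧ φ' x ≠ ⊤) (hψ'pos : ∀ y, 0 < ψ' y ∧ ψ' y ≠ ⊤)
    (hπ'R : π' = R.withDensity fun z => φ' z.1 * ψ' z.2) :
    π = π' :=
  cyclically_invariant_coupling_unique_general μ ν R π π' hπ₁ hπ₂ hπ'₁ hπ'₂ φ ψ hφ hψ hφpos hψpos
    hπR φ' ψ' hφ' hψ' hφ'pos hψ'pos hπ'R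
end

section
/- Uniqueness in the Schrödinger system: let X, Y be Polish spaces, μ, ν probability measures, f : X × Y → (0,∞) Borel with ∫ f d(μ⊗ν) = 1. If (φ, ψ) and (φ', ψ') are two pairs of positive Borel functions each solving ∫_Y f(x,y)ψ(y) ν(dy) = φ(x)^{-1} μ-a.e. and ∫_X f(x,y)φ(x) μ(dx) = ψ(y)^{-1} ν-a.e. (and similarly for (φ', ψ')), then there exists a constant a > 0 such that φ' = aφ μ-a.e. and ψ' = a^{-1}ψ ν-a.e. -/
/-!
Let `π` and `π'` be the measures with densities `g = φ ψ f` and `g' = φ' ψ' f` with respect to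
`μ ⊗ ν`. The Schrödinger equations say exactly that both are couplings of `μ` and `ν`, and
`g' / g = s x / t y` with `s = φ' / φ` and `t = ψ / ψ'`. For the bounded, strictly decreasing
`θ r = (1 + r)⁻¹` the product `(θ (s x) - θ (t y)) * (g - g')` is therefore pointwise nonnegative,
while its integral vanishes because `π` and `π'` have the same marginals (boundedness of `θ` keeps
every integral finite). Hence `g = g'` almost everywhere, i.e. `s x = t y` for `μ ⊗ ν`-almost
every `(x, y)`, and a function of `x` that agrees almost everywhere with a function of `y` is
almost everywhere constant.
-/

open MeasureTheory ENNReal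

theorem ENNReal.mul_add_mul_le_mul_add_mul {a b c d : ℝ≥0∞} (hb : b ≠ ⊤) (hd : d ≠ ⊤)
    (hab : a ≤ b) (hcd : c ≤ d) : a * d + b * c ≤ a * c + b * d := by
  lift b to NNReal using hb
  lift d to NNReal using hd
  lift a to NNReal using ne_top_of_le_ne_top coe_ne_top hab
  lift c to NNReal using ne_top_of_le_ne_top coe_ne_top hcd
  norm_cast at hab hcd ⊢
  exact _root_.mul_add_mul_le_mul_add_mul hab hcd

theorem ENNReal.eq_or_eq_of_mul_add_mul_le {a b c d : ℝ≥0∞} (hb : b ≠ ⊤) (hd : d ≠ ⊤)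
    (hab : a ≤ b) (hcd : c ≤ d) (h : a * c + b * d ≤ a * d + b * c) : a = b ∨ c = d := by
  lift b to NNReal using hb
  lift d to NNReal using hd
  lift a to NNReal using ne_top_of_le_ne_top coe_ne_top hab
  lift c to NNReal using ne_top_of_le_ne_top coe_ne_top hcd
  norm_cast at hab hcd h ⊢
  by_contra! hne
  exact (mul_add_mul_lt_mul_add_mul (hab.lt_of_ne hne.1) (hcd.lt_of_ne hne.2)).not_ge h

theorem ENNReal.inv_one_add_rearrangement {p q u v : ℝ≥0∞} (hp : p ≠ ⊤) (hq : q ≠ ⊤)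
    (hv₀ : v ≠ 0) (hv : v ≠ ⊤) (h : q * v = p * u) :
    (1 + u)⁻¹ * q + (1 + v)⁻¹ * p ≤ (1 + u)⁻¹ * p + (1 + v)⁻¹ * q ∧
      ((1 + u)⁻¹ * p + (1 + v)⁻¹ * q ≤ (1 + u)⁻¹ * q + (1 + v)⁻¹ * p → p = q) := by
  have hinv_inj : (1 + u)⁻¹ = (1 + v)⁻¹ → p = q := fun huv => by
    rw [inv_inj, ENNReal.add_right_inj one_ne_top] at huv
    subst huv
    exact ((ENNReal.mul_left_inj hv₀ hv).1 h).symm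
  rcases le_total u v with huv | hvu
  · have hqp : q ≤ p := (ENNReal.mul_le_mul_iff_left hv₀ hv).1 (h ▸ by gcongr)
    have hab : (1 + v)⁻¹ ≤ (1 + u)⁻¹ := by gcongr
    refine ⟨by simpa only [add_comm] using ENNReal.mul_add_mul_le_mul_add_mul (by simp) hp hab hqp,
      fun hle => ?_⟩
    rcases ENNReal.eq_or_eq_of_mul_add_mul_le (by simp) hp hab hqp
      (by simpa only [add_comm] using hle) with heq | heq
    · exact hinv_inj heq.symm
    · exact heq.symm
  · have hpq : p ≤ q := (ENNReal.mul_le_mul_iff_left hv₀ hv).1 (h ▸ by gcongr)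
    have hab : (1 + u)⁻¹ ≤ (1 + v)⁻¹ := by gcongr
    refine ⟨ENNReal.mul_add_mul_le_mul_add_mul (by simp) hq hab hpq, fun hle => ?_⟩
    exact (ENNReal.eq_or_eq_of_mul_add_mul_le (by simp) hq hab hpq hle).elim hinv_inj id

section Marginals

variable {X Y : Type*} [MeasurableSpace X] [MeasurableSpace Y]

theorem lintegral_fst_withDensity {ρ : Measure (X × Y)} {g : X × Y → ℝ≥0∞} (hg : Measurable g)
    {w : X → ℝ≥0∞} (hw : Measurable w) :
    ∫⁻ x, w x ∂(ρ.withDensity g).fst = ∫⁻ z, w z.1 * g z ∂ρ := by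
  rw [Measure.fst, lintegral_map hw measurable_fst]
  exact (lintegral_withDensity_eq_lintegral_mul _ hg (hw.comp measurable_fst)).trans
    (lintegral_congr fun z => mul_comm _ _)

theorem lintegral_snd_withDensity {ρ : Measure (X × Y)} {g : X × Y → ℝ≥0∞} (hg : Measurable g)
    {w : Y → ℝ≥0∞} (hw : Measurable w) :
    ∫⁻ y, w y ∂(ρ.withDensity g).snd = ∫⁻ z, w z.2 * g z ∂ρ := by
  rw [Measure.snd, lintegral_map hw measurable_snd]
  exact (lintegral_withDensity_eq_lintegral_mul _ hg (hw.comp measurable_snd)).trans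
    (lintegral_congr fun z => mul_comm _ _)

theorem fst_withDensity_prod {μ : Measure X} {ν : Measure Y} [SFinite ν] {g : X × Y → ℝ≥0∞}
    (hg : Measurable g) (h : ∀ᵐ x ∂μ, ∫⁻ y, g (x, y) ∂ν = 1) :
    ((μ.prod ν).withDensity g).fst = μ := by
  refine Measure.ext_of_lintegral _ fun w hw => ?_
  rw [lintegral_fst_withDensity hg hw, lintegral_prod _ (by fun_prop)]
  refine lintegral_congr_ae (h.mono fun x hx => ?_)
  dsimp only
  rw [lintegral_const_mul _ (by fun_prop), hx, mul_one]

theorem snd_withDensity_prod {μ : Measure X} {ν : Measure Y} [SFinite μ] [SFinite ν]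
    {g : X × Y → ℝ≥0∞} (hg : Measurable g) (h : ∀ᵐ y ∂ν, ∫⁻ x, g (x, y) ∂μ = 1) :
    ((μ.prod ν).withDensity g).snd = ν := by
  refine Measure.ext_of_lintegral _ fun w hw => ?_
  rw [lintegral_snd_withDensity hg hw, lintegral_prod_symm _ (by fun_prop)]
  refine lintegral_congr_ae (h.mono fun y hy => ?_)
  dsimp only
  rw [lintegral_const_mul _ (by fun_prop), hy, mul_one]

theorem fst_withDensity_mul_mul {μ : Measure X} {ν : Measure Y} [SFinite ν]
    {f : X × Y → ℝ≥0∞} {φ : X → ℝ≥0∞} {ψ : Y → ℝ≥0∞} (hf : Measurable f) (hφ : Measurable φ)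
    (hψ : Measurable ψ) (hφ₀ : ∀ x, φ x ≠ 0) (hφ_top : ∀ x, φ x ≠ ⊤)
    (hsys : ∀ᵐ x ∂μ, ∫⁻ y, f (x, y) * ψ y ∂ν = (φ x)⁻¹) :
    ((μ.prod ν).withDensity fun z => φ z.1 * ψ z.2 * f z).fst = μ := by
  refine fst_withDensity_prod (by fun_prop) (hsys.mono fun x hx => ?_)
  calc ∫⁻ y, φ x * ψ y * f (x, y) ∂ν = φ x * ∫⁻ y, f (x, y) * ψ y ∂ν := by
        rw [← lintegral_const_mul' _ _ (hφ_top x)]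
        simp_rw [mul_assoc, mul_comm (ψ _)]
    _ = 1 := by rw [hx, ENNReal.mul_inv_cancel (hφ₀ x) (hφ_top x)]

theorem snd_withDensity_mul_mul {μ : Measure X} {ν : Measure Y} [SFinite μ] [SFinite ν]
    {f : X × Y → ℝ≥0∞} {φ : X → ℝ≥0∞} {ψ : Y → ℝ≥0∞} (hf : Measurable f) (hφ : Measurable φ)
    (hψ : Measurable ψ) (hψ₀ : ∀ y, ψ y ≠ 0) (hψ_top : ∀ y, ψ y ≠ ⊤)
    (hsys : ∀ᵐ y ∂ν, ∫⁻ x, f (x, y) * φ x ∂μ = (ψ y)⁻¹) :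
    ((μ.prod ν).withDensity fun z => φ z.1 * ψ z.2 * f z).snd = ν := by
  refine snd_withDensity_prod (by fun_prop) (hsys.mono fun y hy => ?_)
  calc ∫⁻ x, φ x * ψ y * f (x, y) ∂μ = ψ y * ∫⁻ x, f (x, y) * φ x ∂μ := by
        rw [← lintegral_const_mul' _ _ (hψ_top y)]
        congr 1 with x
        ring
    _ = 1 := by rw [hy, ENNReal.mul_inv_cancel (hψ₀ y) (hψ_top y)]

theorem ae_eq_of_withDensity_marginals_eq {ρ : Measure (X × Y)} {g g' : X × Y → ℝ≥0∞}
    {s : X → ℝ≥0∞} {t : Y → ℝ≥0∞} (hg : Measurable g) (hg' : Measurable g')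
    (hs : Measurable s) (ht : Measurable t) (hg_top : ∀ z, g z ≠ ⊤) (hg'_top : ∀ z, g' z ≠ ⊤)
    (ht₀ : ∀ y, t y ≠ 0) (ht_top : ∀ y, t y ≠ ⊤) (hratio : ∀ z, g' z * t z.2 = g z * s z.1)
    (hfin : ∫⁻ z, g z ∂ρ ≠ ⊤) (hfst : (ρ.withDensity g).fst = (ρ.withDensity g').fst)
    (hsnd : (ρ.withDensity g).snd = (ρ.withDensity g').snd) : g =ᵐ[ρ] g' := by
  have hpoint z := ENNReal.inv_one_add_rearrangement (hg_top z) (hg'_top z) (ht₀ z.2)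
    (ht_top z.2) (hratio z)
  have hfst_int : ∫⁻ z, (1 + s z.1)⁻¹ * g' z ∂ρ = ∫⁻ z, (1 + s z.1)⁻¹ * g z ∂ρ := by
    rw [← lintegral_fst_withDensity (w := fun x => (1 + s x)⁻¹) hg' (by fun_prop), ← hfst,
      lintegral_fst_withDensity hg (by fun_prop)]
  have hsnd_int : ∫⁻ z, (1 + t z.2)⁻¹ * g' z ∂ρ = ∫⁻ z, (1 + t z.2)⁻¹ * g z ∂ρ := by
    rw [← lintegral_snd_withDensity (w := fun y => (1 + t y)⁻¹) hg' (by fun_prop), ← hsnd,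
      lintegral_snd_withDensity hg (by fun_prop)]
  have hfin_of_le_one {w : X × Y → ℝ≥0∞} (hw : ∀ z, w z ≤ 1) : ∫⁻ z, w z * g z ∂ρ ≠ ⊤ :=
    ne_top_of_le_ne_top hfin (lintegral_mono fun z => mul_le_of_le_one_left' (hw z))
  have hlower : ∫⁻ z, (1 + s z.1)⁻¹ * g' z + (1 + t z.2)⁻¹ * g z ∂ρ
      = ∫⁻ z, (1 + s z.1)⁻¹ * g z ∂ρ + ∫⁻ z, (1 + t z.2)⁻¹ * g z ∂ρ := by
    rw [lintegral_add_left (by fun_prop), hfst_int]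
  have hupper : ∫⁻ z, (1 + s z.1)⁻¹ * g z + (1 + t z.2)⁻¹ * g' z ∂ρ
      = ∫⁻ z, (1 + s z.1)⁻¹ * g z ∂ρ + ∫⁻ z, (1 + t z.2)⁻¹ * g z ∂ρ := by
    rw [lintegral_add_left (by fun_prop), hsnd_int]
  have hae := ae_eq_of_ae_le_of_lintegral_le (ae_of_all _ fun z => (hpoint z).1)
    (hlower ▸ add_ne_top.2 ⟨hfin_of_le_one fun _ => by simp, hfin_of_le_one fun _ => by simp⟩)
    (by fun_prop) (hupper.trans hlower.symm).le
  exact hae.mono fun z hz => (hpoint z).2 hz.ge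

theorem ae_div_eq_div_of_withDensity_marginals_eq {ρ : Measure (X × Y)} {k : X × Y → ℝ≥0∞}
    {φ φ' : X → ℝ≥0∞} {ψ ψ' : Y → ℝ≥0∞} (hk : Measurable k) (hφ : Measurable φ)
    (hψ : Measurable ψ) (hφ' : Measurable φ') (hψ' : Measurable ψ')
    (hkpos : ∀ z, 0 < k z ∧ k z ≠ ⊤) (hφpos : ∀ x, 0 < φ x ∧ φ x ≠ ⊤)
    (hψpos : ∀ y, 0 < ψ y ∧ ψ y ≠ ⊤) (hφ'_top : ∀ x, φ' x ≠ ⊤) (hψ'pos : ∀ y, 0 < ψ' y ∧ ψ' y ≠ ⊤)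
    (hfin : ∫⁻ z, φ z.1 * ψ z.2 * k z ∂ρ ≠ ⊤)
    (hfst : (ρ.withDensity fun z => φ z.1 * ψ z.2 * k z).fst =
      (ρ.withDensity fun z => φ' z.1 * ψ' z.2 * k z).fst)
    (hsnd : (ρ.withDensity fun z => φ z.1 * ψ z.2 * k z).snd =
      (ρ.withDensity fun z => φ' z.1 * ψ' z.2 * k z).snd) :
    ∀ᵐ z ∂ρ, φ' z.1 / φ z.1 = ψ z.2 / ψ' z.2 := by
  have hg₀ z : φ z.1 * ψ z.2 * k z ≠ 0 :=
    mul_ne_zero (mul_ne_zero (hφpos _).1.ne' (hψpos _).1.ne') (hkpos z).1.ne'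
  have hg_top z : φ z.1 * ψ z.2 * k z ≠ ⊤ :=
    mul_ne_top (mul_ne_top (hφpos _).2 (hψpos _).2) (hkpos z).2
  have hratio z : φ' z.1 * ψ' z.2 * k z * (ψ z.2 / ψ' z.2) =
      φ z.1 * ψ z.2 * k z * (φ' z.1 / φ z.1) := by
    calc φ' z.1 * ψ' z.2 * k z * (ψ z.2 / ψ' z.2)
        = φ' z.1 * ψ z.2 * k z * (ψ' z.2 * (ψ' z.2)⁻¹) := by rw [div_eq_mul_inv]; ring
      _ = φ' z.1 * ψ z.2 * k z * (φ z.1 * (φ z.1)⁻¹) := by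
          rw [ENNReal.mul_inv_cancel (hψ'pos _).1.ne' (hψ'pos _).2,
            ENNReal.mul_inv_cancel (hφpos _).1.ne' (hφpos _).2]
      _ = φ z.1 * ψ z.2 * k z * (φ' z.1 / φ z.1) := by rw [div_eq_mul_inv]; ring
  have hae := ae_eq_of_withDensity_marginals_eq (s := fun x => φ' x / φ x)
    (t := fun y => ψ y / ψ' y) (by fun_prop) (by fun_prop) (by fun_prop) (by fun_prop) hg_top
    (fun z => mul_ne_top (mul_ne_top (hφ'_top _) (hψ'pos _).2) (hkpos z).2)
    (fun y => (ENNReal.div_pos (hψpos y).1.ne' (hψ'pos y).2).ne')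
    (fun y => ENNReal.div_ne_top (hψpos y).2 (hψ'pos y).1.ne') hratio hfin hfst hsnd
  refine hae.mono fun z (hz : φ z.1 * ψ z.2 * k z = φ' z.1 * ψ' z.2 * k z) => ?_
  exact ((ENNReal.mul_right_inj (hg₀ z) (hg_top z)).1 ((congrArg (· * _) hz).trans (hratio z))).symm

theorem exists_ae_eq_const_of_ae_prod {α : Type*} {μ : Measure X} {ν : Measure Y} [SFinite ν]
    [NeZero μ] [NeZero ν] {s : X → α} {t : Y → α} (h : ∀ᵐ z ∂μ.prod ν, s z.1 = t z.2) :
    ∃ c, (∀ᵐ x ∂μ, s x = c) ∧ ∀ᵐ y ∂ν, t y = c := by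
  have h' := Measure.ae_ae_of_ae_prod h
  obtain ⟨x₀, hx₀⟩ := h'.exists
  have ht : ∀ᵐ y ∂ν, t y = s x₀ := hx₀.mono fun _ hy => hy.symm
  refine ⟨s x₀, h'.mono fun x hx => ?_, ht⟩
  obtain ⟨y, hxy, hy⟩ := (hx.and ht).exists
  exact hxy.trans hy

end Marginals

theorem schroedinger_system_uniqueness_general
    {X Y : Type*} [MeasurableSpace X] [MeasurableSpace Y]
    (μ : Measure X) [IsProbabilityMeasure μ] (ν : Measure Y) [IsProbabilityMeasure ν]
    (f : X × Y → ℝ≥0∞) (hf : Measurable f) (hfpos : ∀ z, 0 < f z ∧ f z ≠ ⊤)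
    (φ φ' : X → ℝ≥0∞) (ψ ψ' : Y → ℝ≥0∞)
    (hφ : Measurable φ) (hψ : Measurable ψ) (hφ' : Measurable φ') (hψ' : Measurable ψ')
    (hφpos : ∀ x, 0 < φ x ∧ φ x ≠ ⊤) (hψpos : ∀ y, 0 < ψ y ∧ ψ y ≠ ⊤)
    (hφ'pos : ∀ x, 0 < φ' x ∧ φ' x ≠ ⊤) (hψ'pos : ∀ y, 0 < ψ' y ∧ ψ' y ≠ ⊤)
    (hsys₁ : ∀ᵐ x ∂μ, ∫⁻ y, f (x, y) * ψ y ∂ν = (φ x)⁻¹)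
    (hsys₂ : ∀ᵐ y ∂ν, ∫⁻ x, f (x, y) * φ x ∂μ = (ψ y)⁻¹)
    (hsys₁' : ∀ᵐ x ∂μ, ∫⁻ y, f (x, y) * ψ' y ∂ν = (φ' x)⁻¹)
    (hsys₂' : ∀ᵐ y ∂ν, ∫⁻ x, f (x, y) * φ' x ∂μ = (ψ' y)⁻¹) :
    ∃ a : ℝ≥0∞, 0 < a ∧ a ≠ ⊤ ∧
      (∀ᵐ x ∂μ, φ' x = a * φ x) ∧ (∀ᵐ y ∂ν, ψ' y = a⁻¹ * ψ y) := by
  have hπ_fst := fst_withDensity_mul_mul hf hφ hψ (fun x => (hφpos x).1.ne')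
    (fun x => (hφpos x).2) hsys₁
  have hπ'_fst := fst_withDensity_mul_mul hf hφ' hψ' (fun x => (hφ'pos x).1.ne')
    (fun x => (hφ'pos x).2) hsys₁'
  have hπ_snd := snd_withDensity_mul_mul hf hφ hψ (fun y => (hψpos y).1.ne')
    (fun y => (hψpos y).2) hsys₂
  have hπ'_snd := snd_withDensity_mul_mul hf hφ' hψ' (fun y => (hψ'pos y).1.ne')
    (fun y => (hψ'pos y).2) hsys₂'
  have hfin : ∫⁻ z, φ z.1 * ψ z.2 * f z ∂μ.prod ν ≠ ⊤ := by
    rw [← setLIntegral_univ, ← withDensity_apply _ MeasurableSet.univ, ← Measure.fst_univ, hπ_fst]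
    simp
  obtain ⟨a, hs, ht⟩ := exists_ae_eq_const_of_ae_prod (s := fun x => φ' x / φ x)
    (t := fun y => ψ y / ψ' y) (ae_div_eq_div_of_withDensity_marginals_eq hf hφ hψ hφ' hψ' hfpos hφpos hψpos
      (fun x => (hφ'pos x).2) hψ'pos hfin (hπ_fst.trans hπ'_fst.symm) (hπ_snd.trans hπ'_snd.symm))
  obtain ⟨x₀, hx₀⟩ := hs.exists
  have ha₀ : a ≠ 0 := hx₀ ▸ (ENNReal.div_pos (hφ'pos x₀).1.ne' (hφpos x₀).2).ne'
  have ha_top : a ≠ ⊤ := hx₀ ▸ ENNReal.div_ne_top (hφ'pos x₀).2 (hφpos x₀).1.ne'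
  refine ⟨a, pos_iff_ne_zero.2 ha₀, ha_top, hs.mono fun x hx => ?_, ht.mono fun y hy => ?_⟩
  · rw [← hx, ENNReal.div_mul_cancel (hφpos x).1.ne' (hφpos x).2]
  · rw [← (ENNReal.eq_div_iff (hψ'pos y).1.ne' (hψ'pos y).2).1 hy.symm, mul_comm (ψ' y),
      ENNReal.inv_mul_cancel_left ha₀ ha_top]

/-- Uniqueness in the Schrödinger system: any two positive solutions (φ, ψ) and
(φ', ψ') of the Schrödinger system for the same f, μ, ν coincide up to a positive
multiplicative constant a: φ' = aφ μ-a.e. and ψ' = a⁻¹ψ ν-a.e. -/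
theorem schroedinger_system_uniqueness
    {X Y : Type*} [MetricSpace X] [TopologicalSpace.SeparableSpace X] [CompleteSpace X]
    [MeasurableSpace X] [BorelSpace X]
    [MetricSpace Y] [TopologicalSpace.SeparableSpace Y] [CompleteSpace Y]
    [MeasurableSpace Y] [BorelSpace Y]
    (μ : Measure X) [IsProbabilityMeasure μ] (ν : Measure Y) [IsProbabilityMeasure ν]
    (f : X × Y → ℝ≥0∞) (hf : Measurable f) (hfpos : ∀ z, 0 < f z ∧ f z ≠ ⊤)
    (hfint : ∫⁻ z, f z ∂(μ.prod ν) = 1)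
    (φ φ' : X → ℝ≥0∞) (ψ ψ' : Y → ℝ≥0∞)
    (hφ : Measurable φ) (hψ : Measurable ψ) (hφ' : Measurable φ') (hψ' : Measurable ψ')
    (hφpos : ∀ x, 0 < φ x ∧ φ x ≠ ⊤) (hψpos : ∀ y, 0 < ψ y ∧ ψ y ≠ ⊤)
    (hφ'pos : ∀ x, 0 < φ' x ∧ φ' x ≠ ⊤) (hψ'pos : ∀ y, 0 < ψ' y ∧ ψ' y ≠ ⊤)
    (hsys₁ : ∀ᵐ x ∂μ, ∫⁻ y, f (x, y) * ψ y ∂ν = (φ x)⁻¹)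
    (hsys₂ : ∀ᵐ y ∂ν, ∫⁻ x, f (x, y) * φ x ∂μ = (ψ y)⁻¹)
    (hsys₁' : ∀ᵐ x ∂μ, ∫⁻ y, f (x, y) * ψ' y ∂ν = (φ' x)⁻¹)
    (hsys₂' : ∀ᵐ y ∂ν, ∫⁻ x, f (x, y) * φ' x ∂μ = (ψ' y)⁻¹) :
    ∃ a : ℝ≥0∞, 0 < a ∧ a ≠ ⊤ ∧
      (∀ᵐ x ∂μ, φ' x = a * φ x) ∧ (∀ᵐ y ∂ν, ψ' y = a⁻¹ * ψ y) :=
  schroedinger_system_uniqueness_general μ ν f hf hfpos φ φ' ψ ψ' hφ hψ hφ' hψ' hφpos hψpos hφ'pos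
    hψ'pos hsys₁ hsys₂ hsys₁' hsys₂'
end
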